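/- arXiv:1302.2380 — 3 statements merged into one kernel-verified Lean document; each statement's English description precedes it below -/
import Mathlib

section
/- Let d₋₁, d₊₁, D, D̃ be closed disks in ℂ such that: D̃ is contained in the interior of D; both D and D̃ meet both d₋₁ and d₊₁; the set d₋₁ ∩ d₊₁ ∩ D is empty; and neither d₋₁ nor d₊₁ is contained in D. Writing θ₋₁ = ∠(D, d₋₁), θ̃₋₁ = ∠(D̃, d₋₁), θ₊₁ = ∠(D, d₊₁), θ̃₊₁ = ∠(D̃, d₊₁), we have θ̃₋₁ + θ̃₊₁ < θ₋₁ + θ₊₁. -/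
/-!
Shrink `D` onto `D̃` through the disks `D_t` with centre `c_D + t (c_T - c_D)` and radius
`r_D - t (r_D - r_T)`, `0 ≤ t ≤ 1`; each `D_t` lies between `D̃` and `D`. A disk of radius `R`
moving with centre velocity `u` and radius velocity `-ρ` changes its angle with a fixed disk `d`
at rate `(⟪e, u⟫ - ρ cos β) / (R sin β)`, where `e` is the unit vector towards the centre of `d`
and `β` is half the angle of the arc of `∂D_t` inside `d`. As `d₋₁ ∩ d₊₁ ∩ D_t = ∅` these two
arcs are disjoint, so `β₋₁ + β₊₁ < ∠(e₋₁, e₊₁)`; then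
`‖sin β₊₁ • e₋₁ + sin β₋₁ • e₊₁‖ < sin (β₋₁ + β₊₁)`, and `‖u‖ < ρ` with Cauchy–Schwarz makes
the rate of change of the angle sum negative.
-/

open Metric Real

/-- The external intersection angle between two overlapping closed metric disks in `ℂ`
(neither contained in the other), computed from centers and radii. -/
noncomputable def extAngle (c₁ : ℂ) (r₁ : ℝ) (c₂ : ℂ) (r₂ : ℝ) : ℝ :=
  Real.arccos ((dist c₁ c₂ ^ 2 - r₁ ^ 2 - r₂ ^ 2) / (2 * r₁ * r₂))

open InnerProductGeometry Set
open scoped RealInnerProductSpace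

section Triangle

variable {a b c : ℝ}

theorem pos_of_mem_Ioo_abs_sub (h : a ∈ Ioo |b - c| (b + c)) : 0 < a ∧ 0 < b ∧ 0 < c := by
  obtain ⟨h₁, h₂⟩ := h
  rw [abs_lt] at h₁
  exact ⟨by linarith, by linarith, by linarith⟩

theorem abs_div_lt_one_of_mem_Ioo_abs_sub (h : a ∈ Ioo |b - c| (b + c)) :
    |(b ^ 2 + c ^ 2 - a ^ 2) / (2 * b * c)| < 1 := by
  obtain ⟨ha, hb, hc⟩ := pos_of_mem_Ioo_abs_sub h
  obtain ⟨h₁, h₂⟩ := h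
  rw [abs_lt] at h₁
  rw [abs_div, abs_of_pos (by positivity : 0 < 2 * b * c), div_lt_one (by positivity), abs_lt]
  constructor <;> nlinarith

theorem mem_Ioo_abs_sub_rotate (h : a ∈ Ioo |b - c| (b + c)) : b ∈ Ioo |c - a| (c + a) := by
  obtain ⟨h₁, h₂⟩ := h
  rw [abs_lt] at h₁
  exact ⟨abs_lt.2 ⟨by linarith, by linarith⟩, by linarith⟩

end Triangle

theorem dist_mem_Ioo_of_overlap {X : Type*} [PseudoMetricSpace X] {c a : X} {R r : ℝ}
    (hov : (closedBall c R ∩ ball a r).Nonempty) (hac : ¬closedBall a r ⊆ closedBall c R)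
    (hca : ¬closedBall c R ⊆ closedBall a r) : dist c a ∈ Ioo |R - r| (R + r) := by
  obtain ⟨x, hxc, hxa⟩ := hov
  have h₁ : R - r < dist c a := by
    by_contra! h
    exact hac (closedBall_subset_closedBall' (by rw [dist_comm]; linarith))
  have h₂ : r - R < dist c a := by
    by_contra! h
    exact hca (closedBall_subset_closedBall' (by linarith))
  refine ⟨abs_sub_lt_iff.2 ⟨h₁, h₂⟩, ?_⟩
  rw [mem_closedBall] at hxc
  rw [mem_ball] at hxa
  linarith [dist_triangle_left c a x]

theorem dist_add_lt_of_closedBall_subset_ball {E : Type*} [NormedAddCommGroup E]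
    [NormedSpace ℝ E] [Nontrivial E] {x y : E} {r R : ℝ} (hr : 0 ≤ r)
    (h : closedBall x r ⊆ ball y R) : dist x y + r < R := by
  obtain ⟨v, hv, hxy⟩ : ∃ v : E, ‖v‖ = 1 ∧ x - y = ‖x - y‖ • v := by
    rcases eq_or_ne (x - y) 0 with hxy | hxy
    · obtain ⟨v, hv⟩ := exists_norm_eq E zero_le_one
      exact ⟨v, hv, by simp [hxy]⟩
    · exact ⟨‖x - y‖⁻¹ • (x - y), norm_smul_inv_norm hxy, by
        rw [smul_smul, mul_inv_cancel₀ (norm_ne_zero_iff.2 hxy), one_smul]⟩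
  have hmem : x + r • v ∈ closedBall x r := by
    simp [norm_smul, hv, abs_of_nonneg hr]
  have hdist : dist (x + r • v) y = dist x y + r := by
    rw [dist_eq_norm, dist_eq_norm, add_sub_right_comm]
    conv_lhs => rw [hxy, ← add_smul, norm_smul, hv, mul_one]
    exact Real.norm_of_nonneg (by positivity)
  simpa [hdist] using h hmem

theorem strictAntiOn_of_forall_hasDerivAt_neg {f : ℝ → ℝ} {D : Set ℝ} (hD : Convex ℝ D)
    (h : ∀ x ∈ D, ∃ f' < 0, HasDerivAt f f' x) : StrictAntiOn f D := by
  refine strictAntiOn_of_deriv_neg hD (fun x hx ↦ ?_) (fun x hx ↦ ?_)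
  · obtain ⟨f', -, hf⟩ := h x hx
    exact hf.continuousAt.continuousWithinAt
  · obtain ⟨f', hf', hf⟩ := h x (interior_subset hx)
    rwa [hf.deriv]

theorem abs_toIocMod_neg_pi {v : ℝ} (hv : |v| ≤ π) :
    |toIocMod two_pi_pos (-π) v| = |v| := by
  rcases eq_or_ne v (-π) with rfl | hne
  · rw [toIocMod_apply_left, show -π + 2 * π = π by ring, abs_neg]
  · rw [(toIocMod_eq_self _).2]
    obtain ⟨h₁, h₂⟩ := abs_le.1 hv
    exact ⟨lt_of_le_of_ne h₁ (Ne.symm hne), by linarith⟩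

namespace Complex

theorem exists_angle_eq_and_angle_eq_sub {x y : ℂ} (hx : x ≠ 0) (hy : y ≠ 0) {β : ℝ}
    (hβ : 0 ≤ β) (hβψ : β ≤ angle x y) :
    ∃ ω ≠ 0, angle ω x = β ∧ angle ω y = angle x y - β := by
  set φ := (y / x).arg
  have hψ : angle x y = |φ| := by rw [angle_comm, angle_eq_abs_arg hy hx]
  have hφ : |φ| ≤ π := abs_arg_le_pi _
  obtain ⟨s, hs, hsφ⟩ : ∃ s : ℝ, |s| = 1 ∧ φ = s * |φ| := by
    rcases le_total 0 φ with h | h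
    · exact ⟨1, by simp, by simp [abs_of_nonneg h]⟩
    · exact ⟨-1, by simp, by simp [abs_of_nonpos h]⟩
  have hy' : y = x * (‖y / x‖ • exp (φ * I)) := by
    rw [real_smul, norm_mul_exp_arg_mul_I, mul_div_cancel₀ _ hx]
  -- `x` rotated by `β` towards `y`
  refine ⟨x * exp ((s * β : ℝ) * I), mul_ne_zero hx (exp_ne_zero _), ?_, ?_⟩
  · have hsβ : |s * β| = β := by rw [abs_mul, hs, one_mul, abs_of_nonneg hβ]
    calc angle (x * exp ((s * β : ℝ) * I)) x
        = angle (x * exp ((s * β : ℝ) * I)) (x * exp ((0 : ℝ) * I)) := by simp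
      _ = β := by
        rw [angle_mul_left hx, angle_exp_exp, sub_zero, abs_toIocMod_neg_pi] <;> linarith
  · have hdiff : |s * β - φ| = |φ| - β := by
      conv_lhs => rw [hsφ]
      rw [← mul_sub, abs_mul, hs, one_mul, abs_sub_comm,
        abs_of_nonneg (by linarith)]
    rw [hψ, hy', angle_mul_left hx,
      angle_smul_right_of_pos _ _ (norm_pos_iff.2 (div_ne_zero hy hx)), angle_exp_exp,
      abs_toIocMod_neg_pi] <;> linarith

end Complex

/-- Half the angle, seen from `c`, of the arc of the circle `∂B(c, R)` lying in `closedBall a r`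
(law of cosines in the triangle formed by `c`, `a` and an intersection point of the circles). -/
noncomputable def arcAngle (c : ℂ) (R : ℝ) (a : ℂ) (r : ℝ) : ℝ :=
  arccos ((dist c a ^ 2 + R ^ 2 - r ^ 2) / (2 * dist c a * R))

section arcAngle

variable {c a : ℂ} {R r : ℝ}

theorem abs_cosine_rule_lt_one (h : dist c a ∈ Ioo |R - r| (R + r)) :
    |(dist c a ^ 2 + R ^ 2 - r ^ 2) / (2 * dist c a * R)| < 1 :=
  abs_div_lt_one_of_mem_Ioo_abs_sub (mem_Ioo_abs_sub_rotate (mem_Ioo_abs_sub_rotate h))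

theorem cos_arcAngle (h : dist c a ∈ Ioo |R - r| (R + r)) :
    cos (arcAngle c R a r) = (dist c a ^ 2 + R ^ 2 - r ^ 2) / (2 * dist c a * R) :=
  have h' := abs_lt.1 (abs_cosine_rule_lt_one h)
  cos_arccos h'.1.le h'.2.le

theorem arcAngle_pos (h : dist c a ∈ Ioo |R - r| (R + r)) : 0 < arcAngle c R a r :=
  arccos_pos.2 (abs_lt.1 (abs_cosine_rule_lt_one h)).2

theorem sin_arcAngle_pos (h : dist c a ∈ Ioo |R - r| (R + r)) : 0 < sin (arcAngle c R a r) :=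
  sin_pos_of_pos_of_lt_pi (arcAngle_pos h) (arccos_lt_pi.2 (abs_lt.1 (abs_cosine_rule_lt_one h)).1)

theorem sin_extAngle (h : dist c a ∈ Ioo |R - r| (R + r)) :
    sin (extAngle c R a r) = dist c a / r * sin (arcAngle c R a r) := by
  obtain ⟨hd, hR, hr⟩ := pos_of_mem_Ioo_abs_sub h
  rw [extAngle, arcAngle, sin_arccos, sin_arccos, ← sqrt_sq (div_nonneg hd.le hr.le),
    ← sqrt_mul (sq_nonneg _)]
  congr 1
  field_simp
  ring

theorem hasDerivAt_extAngle_line {u : ℂ} {ρ : ℝ} (h : dist c a ∈ Ioo |R - r| (R + r)) :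
    HasDerivAt (fun s : ℝ ↦ extAngle (c + s • u) (R - s * ρ) a r)
      ((⟪(dist c a)⁻¹ • (a - c), u⟫ - ρ * cos (arcAngle c R a r)) /
        (R * sin (arcAngle c R a r))) 0 := by
  obtain ⟨hd, hR, hr⟩ := pos_of_mem_Ioo_abs_sub h
  have hF : |(dist c a ^ 2 - R ^ 2 - r ^ 2) / (2 * R * r)| < 1 := by
    rw [← abs_neg, ← neg_div]
    convert abs_div_lt_one_of_mem_Ioo_abs_sub h using 3
    ring
  have hnum : HasDerivAt (fun s : ℝ ↦ dist (c + s • u) a ^ 2 - (R - s * ρ) ^ 2 - r ^ 2)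
      (2 * ⟪c - a, u⟫ + 2 * R * ρ) 0 := by
    have hpath : HasDerivAt (fun s : ℝ ↦ c + s • u - a) u 0 := by
      simpa using (((hasDerivAt_id (0 : ℝ)).smul_const u).const_add c).sub_const a
    have hrad : HasDerivAt (fun s : ℝ ↦ R - s * ρ) (-ρ) 0 := by
      simpa using ((hasDerivAt_id (0 : ℝ)).mul_const ρ).const_sub R
    simp only [dist_eq_norm]
    refine ((hpath.norm_sq.fun_sub (hrad.fun_pow 2)).sub_const (r ^ 2)).congr_deriv ?_
    simp
  have hden : HasDerivAt (fun s : ℝ ↦ 2 * (R - s * ρ) * r) (-(2 * ρ * r)) 0 := by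
    simpa using (((hasDerivAt_id (0 : ℝ)).mul_const ρ).const_sub R |>.const_mul 2).mul_const r
  have hquot := hnum.fun_div hden (by simp only [zero_mul, sub_zero]; positivity)
  refine ((hasDerivAt_arccos (abs_lt.1 hF).1.ne' (abs_lt.1 hF).2.ne).comp_of_eq 0 hquot
    (by simp)).congr_deriv ?_
  have hsin := sin_extAngle h
  rw [extAngle, sin_arccos] at hsin
  have hS := sin_arcAngle_pos h
  simp only [zero_mul, sub_zero, zero_smul, add_zero]
  rw [hsin, cos_arcAngle h, real_inner_smul_left, ← neg_sub a c, inner_neg_left]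
  field_simp
  ring

end arcAngle

theorem dist_le_of_angle_le_arcAngle {c a ω : ℂ} {R r : ℝ} (h : dist c a ∈ Ioo |R - r| (R + r))
    (hω : ‖ω‖ = 1) (hangle : angle ω (a - c) ≤ arcAngle c R a r) :
    dist (c + R • ω) a ≤ r := by
  obtain ⟨hd, hR, hr⟩ := pos_of_mem_Ioo_abs_sub h
  have hac : ‖a - c‖ = dist c a := by rw [dist_comm, dist_eq_norm]
  have hcos : (dist c a ^ 2 + R ^ 2 - r ^ 2) / (2 * dist c a * R) ≤ cos (angle ω (a - c)) :=
    cos_arcAngle h ▸ cos_le_cos_of_nonneg_of_le_pi (angle_nonneg _ _) (arccos_le_pi _) hangle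
  rw [div_le_iff₀ (by positivity)] at hcos
  have hsq : dist (c + R • ω) a ^ 2 ≤ r ^ 2 := by
    rw [dist_eq_norm, show c + R • ω - a = R • ω - (a - c) by abel, norm_sub_sq_real,
      real_inner_smul_left, ← cos_angle_mul_norm_mul_norm, norm_smul, hω, hac,
      Real.norm_of_nonneg hR.le]
    nlinarith
  exact (pow_le_pow_iff_left₀ dist_nonneg hr.le two_ne_zero).1 hsq

theorem arcAngle_add_arcAngle_lt_angle {c a₁ a₂ : ℂ} {R r₁ r₂ : ℝ}
    (h₁ : dist c a₁ ∈ Ioo |R - r₁| (R + r₁)) (h₂ : dist c a₂ ∈ Ioo |R - r₂| (R + r₂))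
    (hemp : closedBall a₁ r₁ ∩ closedBall a₂ r₂ ∩ closedBall c R = ∅) :
    arcAngle c R a₁ r₁ + arcAngle c R a₂ r₂ < angle (a₁ - c) (a₂ - c) := by
  obtain ⟨hd₁, hR, -⟩ := pos_of_mem_Ioo_abs_sub h₁
  obtain ⟨hd₂, -, -⟩ := pos_of_mem_Ioo_abs_sub h₂
  have hne₁ : a₁ - c ≠ 0 := sub_ne_zero.2 (dist_pos.1 hd₁).symm
  have hne₂ : a₂ - c ≠ 0 := sub_ne_zero.2 (dist_pos.1 hd₂).symm
  by_contra! hle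
  obtain ⟨ω, hω, hω₁, hω₂⟩ := Complex.exists_angle_eq_and_angle_eq_sub hne₁ hne₂
    (le_min (arcAngle_pos h₁).le (angle_nonneg _ _)) (min_le_right (arcAngle c R a₁ r₁) _)
  have hpos : 0 < ‖ω‖⁻¹ := inv_pos.2 (norm_pos_iff.2 hω)
  have hunit : ‖‖ω‖⁻¹ • ω‖ = 1 := norm_smul_inv_norm (𝕜 := ℝ) hω
  have hx₁ := dist_le_of_angle_le_arcAngle h₁ hunit
    (by rw [angle_smul_left_of_pos _ _ hpos, hω₁]; exact min_le_left _ _)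
  have hx₂ := dist_le_of_angle_le_arcAngle h₂ hunit (by
    rw [angle_smul_left_of_pos _ _ hpos, hω₂]
    rcases min_cases (arcAngle c R a₁ r₁) (angle (a₁ - c) (a₂ - c)) with ⟨h, -⟩ | ⟨h, -⟩ <;>
      rw [h] <;> linarith [arcAngle_pos h₂])
  have hx : c + R • ‖ω‖⁻¹ • ω ∈ closedBall c R := by
    rw [mem_closedBall, dist_eq_norm, add_sub_cancel_left, norm_smul, hunit,
      Real.norm_of_nonneg hR.le, mul_one]
  exact hemp.subset ⟨⟨hx₁, hx₂⟩, hx⟩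

theorem norm_sin_smul_add_sin_smul_lt {E : Type*} [NormedAddCommGroup E] [InnerProductSpace ℝ E]
    {x y : E} (hx : ‖x‖ = 1) (hy : ‖y‖ = 1) {β₁ β₂ : ℝ} (h₁ : 0 < β₁) (h₂ : 0 < β₂)
    (h : β₁ + β₂ < angle x y) : ‖sin β₂ • x + sin β₁ • y‖ < sin (β₁ + β₂) := by
  have hπ := angle_le_pi x y
  have hs₁ : 0 < sin β₁ := sin_pos_of_pos_of_lt_pi h₁ (by linarith)
  have hs₂ : 0 < sin β₂ := sin_pos_of_pos_of_lt_pi h₂ (by linarith)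
  have hs : 0 < sin (β₁ + β₂) := sin_pos_of_pos_of_lt_pi (by linarith) (by linarith)
  have hcos : ⟪x, y⟫ < cos (β₁ + β₂) := by
    rw [← cos_angle_mul_norm_mul_norm, hx, hy, mul_one, mul_one]
    exact cos_lt_cos_of_nonneg_of_le_pi (by linarith) hπ h
  have hsin_sq : sin (β₁ + β₂) ^ 2
      = sin β₁ ^ 2 + sin β₂ ^ 2 + 2 * sin β₁ * sin β₂ * cos (β₁ + β₂) := by
    rw [sin_add, cos_add]
    linear_combination sin β₁ ^ 2 * cos_sq_add_sin_sq β₂ + sin β₂ ^ 2 * cos_sq_add_sin_sq β₁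
  refine (pow_lt_pow_iff_left₀ (norm_nonneg _) hs.le two_ne_zero).1 ?_
  rw [norm_add_sq_real, norm_smul, norm_smul, real_inner_smul_left, real_inner_smul_right, hx, hy,
    Real.norm_of_nonneg hs₁.le, Real.norm_of_nonneg hs₂.le, hsin_sq]
  nlinarith [mul_pos hs₁ hs₂]

theorem exists_hasDerivAt_extAngle_add_extAngle_neg {c u a₁ a₂ : ℂ} {R ρ r₁ r₂ : ℝ}
    (hu : ‖u‖ < ρ) (h₁ : dist c a₁ ∈ Ioo |R - r₁| (R + r₁))
    (h₂ : dist c a₂ ∈ Ioo |R - r₂| (R + r₂))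
    (hemp : closedBall a₁ r₁ ∩ closedBall a₂ r₂ ∩ closedBall c R = ∅) :
    ∃ g' < 0, HasDerivAt (fun s : ℝ ↦
      extAngle (c + s • u) (R - s * ρ) a₁ r₁ + extAngle (c + s • u) (R - s * ρ) a₂ r₂) g' 0 := by
  refine ⟨_, ?_, (hasDerivAt_extAngle_line h₁).add (hasDerivAt_extAngle_line h₂)⟩
  obtain ⟨hd₁, hR, -⟩ := pos_of_mem_Ioo_abs_sub h₁
  obtain ⟨hd₂, -, -⟩ := pos_of_mem_Ioo_abs_sub h₂
  have he₁ : ‖(dist c a₁)⁻¹ • (a₁ - c)‖ = 1 := by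
    rw [dist_comm, dist_eq_norm]
    exact norm_smul_inv_norm (𝕜 := ℝ) (sub_ne_zero.2 (dist_pos.1 hd₁).symm)
  have he₂ : ‖(dist c a₂)⁻¹ • (a₂ - c)‖ = 1 := by
    rw [dist_comm, dist_eq_norm]
    exact norm_smul_inv_norm (𝕜 := ℝ) (sub_ne_zero.2 (dist_pos.1 hd₂).symm)
  set β₁ := arcAngle c R a₁ r₁
  set β₂ := arcAngle c R a₂ r₂
  set e₁ := (dist c a₁)⁻¹ • (a₁ - c)
  set e₂ := (dist c a₂)⁻¹ • (a₂ - c)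
  have hβ : β₁ + β₂ < angle e₁ e₂ := by
    rw [angle_smul_left_of_pos _ _ (inv_pos.2 hd₁), angle_smul_right_of_pos _ _ (inv_pos.2 hd₂)]
    exact arcAngle_add_arcAngle_lt_angle h₁ h₂ hemp
  clear_value e₁ e₂
  have hβ₁ := arcAngle_pos h₁
  have hβ₂ := arcAngle_pos h₂
  have hs₁ := sin_arcAngle_pos h₁
  have hs₂ := sin_arcAngle_pos h₂
  have hρ : 0 < ρ := (norm_nonneg u).trans_lt hu
  have hw : ⟪sin β₂ • e₁ + sin β₁ • e₂, u⟫ < ρ * sin (β₁ + β₂) :=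
    calc _ ≤ ‖sin β₂ • e₁ + sin β₁ • e₂‖ * ‖u‖ := real_inner_le_norm _ _
      _ ≤ ‖sin β₂ • e₁ + sin β₁ • e₂‖ * ρ := by gcongr
      _ < sin (β₁ + β₂) * ρ := by
        gcongr; exact norm_sin_smul_add_sin_smul_lt he₁ he₂ hβ₁ hβ₂ hβ
      _ = ρ * sin (β₁ + β₂) := mul_comm _ _
  rw [inner_add_left, real_inner_smul_left, real_inner_smul_left, sin_add] at hw
  rw [div_add_div _ _ (by positivity) (by positivity)]
  refine div_neg_of_neg_of_pos ?_ (by positivity)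
  linarith [mul_lt_mul_of_pos_left hw hR]

theorem closedBall_subset_closedBall_interpolate {E : Type*} [SeminormedAddCommGroup E]
    [NormedSpace ℝ E] {x y : E} {r R t : ℝ} (h : ‖y - x‖ ≤ R - r) (ht : t ∈ Icc (0 : ℝ) 1) :
    closedBall y r ⊆ closedBall (x + t • (y - x)) (R - t * (R - r)) ∧
      closedBall (x + t • (y - x)) (R - t * (R - r)) ⊆ closedBall x R := by
  obtain ⟨ht₀, ht₁⟩ := ht
  refine ⟨closedBall_subset_closedBall' ?_, closedBall_subset_closedBall' ?_⟩
  · rw [dist_eq_norm, show y - (x + t • (y - x)) = (1 - t) • (y - x) by module, norm_smul,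
      Real.norm_of_nonneg (by linarith)]
    nlinarith
  · rw [dist_eq_norm, add_sub_cancel_left, norm_smul, Real.norm_of_nonneg ht₀]
    nlinarith [norm_nonneg (y - x)]

theorem lem_meat_general
    (cm cp cD cT : ℂ) (rm rp rD rT : ℝ)
    (hrT : 0 < rT)
    -- `D̃` is contained in the interior of `D`:
    (hTD : closedBall cT rT ⊆ ball cD rD)
    -- `D` and `D̃` overlap both `d₋₁` and `d₊₁`:
    (hovTm : (ball cT rT ∩ ball cm rm).Nonempty)
    (hovTp : (ball cT rT ∩ ball cp rp).Nonempty)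
    -- no containments among the relevant overlapping pairs:
    (hmD : ¬ closedBall cm rm ⊆ closedBall cD rD)
    (hpD : ¬ closedBall cp rp ⊆ closedBall cD rD)
    (hTm : ¬ closedBall cT rT ⊆ closedBall cm rm)
    (hTp : ¬ closedBall cT rT ⊆ closedBall cp rp)
    -- `d₋₁ ∩ d₊₁ ∩ D` is empty:
    (hemp : closedBall cm rm ∩ closedBall cp rp ∩ closedBall cD rD = ∅) :
    extAngle cT rT cm rm + extAngle cT rT cp rp
      < extAngle cD rD cm rm + extAngle cD rD cp rp := by
  set u := cT - cD
  set ρ := rD - rT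
  have hu : ‖u‖ < ρ := by
    have := dist_add_lt_of_closedBall_subset_ball hrT.le hTD
    rw [dist_eq_norm] at this
    linarith
  have hrate : ∀ t ∈ Icc (0 : ℝ) 1, ∃ g' < 0, HasDerivAt (fun s : ℝ ↦
      extAngle (cD + s • u) (rD - s * ρ) cm rm + extAngle (cD + s • u) (rD - s * ρ) cp rp)
      g' t := by
    intro t ht
    obtain ⟨hT, hD⟩ := closedBall_subset_closedBall_interpolate hu.le ht
    have hov : ∀ {a : ℂ} {r : ℝ}, (ball cT rT ∩ ball a r).Nonempty →
        ¬closedBall a r ⊆ closedBall cD rD → ¬closedBall cT rT ⊆ closedBall a r →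
        dist (cD + t • u) a ∈ Ioo |rD - t * ρ - r| (rD - t * ρ + r) := fun hov haD hTa ↦
      dist_mem_Ioo_of_overlap
        (hov.mono (inter_subset_inter_left _ (ball_subset_closedBall.trans hT)))
        (fun h ↦ haD (h.trans hD)) (fun h ↦ hTa (hT.trans h))
    obtain ⟨g', hg', hderiv⟩ := exists_hasDerivAt_extAngle_add_extAngle_neg hu
      (hov hovTm hmD hTm) (hov hovTp hpD hTp)
      (subset_eq_empty (inter_subset_inter_right _ hD) hemp)
    refine ⟨g', hg', ?_⟩
    have hshift := HasDerivAt.comp_sub_const t t ((sub_self t).symm ▸ hderiv)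
    refine hshift.congr_of_eventuallyEq (Filter.Eventually.of_forall fun s ↦ ?_)
    dsimp only
    rw [show cD + t • u + (s - t) • u = cD + s • u by module,
      show rD - t * ρ - (s - t) * ρ = rD - s * ρ by ring]
  have hanti := strictAntiOn_of_forall_hasDerivAt_neg (convex_Icc 0 1) hrate
  simpa [u, ρ] using hanti (left_mem_Icc.2 zero_le_one) (right_mem_Icc.2 zero_le_one) zero_lt_one

/-- **Lemma (meat).**  Let `d₋₁, d₊₁, D, D̃` be closed disks in `ℂ` with `D̃` contained
in the interior of `D`, both `D` and `D̃` overlapping both `d₋₁` and `d₊₁` (with no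
containments among the relevant pairs, so all angles are well-defined),
`d₋₁ ∩ d₊₁ ∩ D = ∅`, and neither `d₋₁` nor `d₊₁` contained in `D`.  Then
`∠(D̃,d₋₁) + ∠(D̃,d₊₁) < ∠(D,d₋₁) + ∠(D,d₊₁)`. -/
theorem lem_meat
    (cm cp cD cT : ℂ) (rm rp rD rT : ℝ)
    (hrm : 0 < rm) (hrp : 0 < rp) (hrD : 0 < rD) (hrT : 0 < rT)
    -- `D̃` is contained in the interior of `D`:
    (hTD : closedBall cT rT ⊆ ball cD rD)
    -- `D` and `D̃` overlap both `d₋₁` and `d₊₁`: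
    (hovDm : (ball cD rD ∩ ball cm rm).Nonempty)
    (hovDp : (ball cD rD ∩ ball cp rp).Nonempty)
    (hovTm : (ball cT rT ∩ ball cm rm).Nonempty)
    (hovTp : (ball cT rT ∩ ball cp rp).Nonempty)
    -- no containments among the relevant overlapping pairs:
    (hDm : ¬ closedBall cD rD ⊆ closedBall cm rm)
    (hmD : ¬ closedBall cm rm ⊆ closedBall cD rD)
    (hDp : ¬ closedBall cD rD ⊆ closedBall cp rp)
    (hpD : ¬ closedBall cp rp ⊆ closedBall cD rD)
    (hTm : ¬ closedBall cT rT ⊆ closedBall cm rm)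
    (hmT : ¬ closedBall cm rm ⊆ closedBall cT rT)
    (hTp : ¬ closedBall cT rT ⊆ closedBall cp rp)
    (hpT : ¬ closedBall cp rp ⊆ closedBall cT rT)
    -- `d₋₁ ∩ d₊₁ ∩ D` is empty:
    (hemp : closedBall cm rm ∩ closedBall cp rp ∩ closedBall cD rD = ∅) :
    extAngle cT rT cm rm + extAngle cT rT cp rp
      < extAngle cD rD cm rm + extAngle cD rD cp rp :=
  lem_meat_general cm cp cD cT rm rp rD rT hrT hTD hovTm hovTp hmD hpD hTm hTp hemp
end

section
/- Let {A,B} and {Ã,B̃} be pairs of overlapping closed disks in ℂ in general position with ∠(A,B) = ∠(Ã,B̃). Suppose Ã is contained in the interior of A and B̃ is contained in the interior of B, and suppose neither Ã ⊂ B nor B̃ ⊂ A. Then 2·∠(A,B) < ∠(Ã,B) + ∠(A,B̃). -/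
/-!
Invert in a point `p` where the boundary circles of `Ã` and `B̃` cross. Inversion preserves the
inversive distance `I(C, D) = (|c - d|² - r² - s²) / (2 r s)`, whose arccosine is `∠(C, D)`; it
turns `∂Ã`, `∂B̃` into lines meeting at the angle `a = ∠(A,B)` and, as `p` lies inside `A` and `B`,
turns `∂A`, `∂B` into circles of radii `R₁`, `R₂`. The Gram relation between the normals of the two
lines and the difference of the two centers yields an angle `θ` with
`cos θ = -R₁ I(A,Ã) + R₂ I(Ã,B)` and `cos (θ - a) = R₁ I(A,B̃) - R₂ I(B,B̃)`. Splitting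
`1 = R₁ e^{-i f₂} + R₂ e^{i f₁}` with `f₁ + f₂ = a`, the nestings `I(A,Ã), I(B,B̃) < -1` give
`∠(Ã,B) > θ + f₁` and `∠(A,B̃) > a - θ + f₂`, which add up to `2a`; the non-containments keep
both right-hand sides at most `π`.
-/

open Metric Real

/-- Two circles cross transversely wherever they meet (i.e. they are not tangent
and not identical, whenever they intersect at all). -/
def CircTrans (c₁ : ℂ) (r₁ : ℝ) (c₂ : ℂ) (r₂ : ℝ) : Prop :=
  (Metric.sphere c₁ r₁ ∩ Metric.sphere c₂ r₂).Nonempty →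
    dist c₁ c₂ ≠ r₁ + r₂ ∧ dist c₁ c₂ ≠ |r₁ - r₂|

-- `extAngle c₁ r₁ c₂ r₂` unfolds to `arccos (inversiveDist c₁ r₁ c₂ r₂)`.
noncomputable def inversiveDist (c₁ : ℂ) (r₁ : ℝ) (c₂ : ℂ) (r₂ : ℝ) : ℝ :=
  (dist c₁ c₂ ^ 2 - r₁ ^ 2 - r₂ ^ 2) / (2 * r₁ * r₂)

section Disks

variable {c₁ c₂ : ℂ} {r₁ r₂ : ℝ}

theorem lt_add_dist_of_not_closedBall_subset {α : Type*} [PseudoMetricSpace α] {x y : α}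
    {ε₁ ε₂ : ℝ} (h : ¬ closedBall x ε₁ ⊆ closedBall y ε₂) : ε₂ < ε₁ + dist x y :=
  lt_of_not_ge fun h' => h (closedBall_subset_closedBall' h')

theorem exists_norm_eq_one_mul_eq (z : ℂ) : ∃ v : ℂ, ‖v‖ = 1 ∧ z = ‖z‖ * v :=
  ⟨_, Complex.norm_exp_ofReal_mul_I _, (Complex.norm_mul_exp_arg_mul_I z).symm⟩

theorem add_dist_lt_of_closedBall_subset_ball (hr₁ : 0 < r₁)
    (h : closedBall c₁ r₁ ⊆ ball c₂ r₂) : r₁ + dist c₁ c₂ < r₂ := by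
  obtain ⟨v, hv, hc⟩ := exists_norm_eq_one_mul_eq (c₁ - c₂)
  have hmem : c₁ + r₁ * v ∈ closedBall c₁ r₁ := by
    simp [hv, abs_of_pos hr₁]
  have := mem_ball.1 (h hmem)
  rwa [Complex.dist_eq, add_sub_right_comm, hc, ← add_mul, norm_mul, hv, mul_one,
    ← Complex.ofReal_add, Complex.norm_of_nonneg (by positivity), ← Complex.dist_eq,
    add_comm] at this

theorem nonempty_sphere_inter_sphere (hr₁ : 0 < r₁)
    (hov : (ball c₁ r₁ ∩ ball c₂ r₂).Nonempty)
    (h₁₂ : ¬ closedBall c₁ r₁ ⊆ closedBall c₂ r₂) (h₂₁ : ¬ closedBall c₂ r₂ ⊆ closedBall c₁ r₁) :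
    (sphere c₁ r₁ ∩ sphere c₂ r₂).Nonempty := by
  have hd := dist_lt_add_of_nonempty_ball_inter_ball hov
  have h₁ := lt_add_dist_of_not_closedBall_subset h₁₂
  have h₂ := lt_add_dist_of_not_closedBall_subset h₂₁
  rw [dist_comm] at h₂
  obtain ⟨v, hv, hc⟩ := exists_norm_eq_one_mul_eq (c₂ - c₁)
  rw [← Complex.dist_eq, dist_comm] at hc
  have hdist : ∀ t : ℝ, dist (c₁ + t * v) c₂ = |t - dist c₁ c₂| := fun t => by
    rw [Complex.dist_eq, show c₁ + t * v - c₂ = ((t - dist c₁ c₂ : ℝ) : ℂ) * v by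
      push_cast; linear_combination -hc, norm_mul, hv, mul_one, Complex.norm_real,
      Real.norm_eq_abs]
  have hsphere : ∀ t : ℝ, c₁ + t * v ∈ sphere c₁ |t| := fun t => by simp [hv]
  have hmem : r₂ ∈ Set.Icc (dist (c₁ + r₁ * v) c₂) (dist (c₁ + (-r₁ : ℝ) * v) c₂) := by
    have := dist_nonneg (x := c₁) (y := c₂)
    rw [hdist, hdist, abs_of_neg (a := -r₁ - _) (by linarith)]
    exact ⟨abs_sub_le_iff.2 ⟨by linarith, by linarith⟩, by linarith⟩
  obtain ⟨z, hz, hz₂⟩ := (isConnected_sphere (by simp) c₁ hr₁.le).isPreconnected.intermediate_value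
    (by simpa [abs_of_pos hr₁] using hsphere r₁) (by simpa [abs_of_pos hr₁] using hsphere (-r₁))
    (continuous_id.dist continuous_const).continuousOn hmem
  exact ⟨z, hz, hz₂⟩

theorem inversiveDist_lt_one (hr₁ : 0 < r₁) (hr₂ : 0 < r₂)
    (hov : (ball c₁ r₁ ∩ ball c₂ r₂).Nonempty) : inversiveDist c₁ r₁ c₂ r₂ < 1 := by
  have := dist_lt_add_of_nonempty_ball_inter_ball hov
  rw [inversiveDist, div_lt_one (by positivity)]
  nlinarith [dist_nonneg (x := c₁) (y := c₂)]

theorem neg_one_lt_inversiveDist (hr₁ : 0 < r₁) (hr₂ : 0 < r₂)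
    (h₁₂ : ¬ closedBall c₁ r₁ ⊆ closedBall c₂ r₂) (h₂₁ : ¬ closedBall c₂ r₂ ⊆ closedBall c₁ r₁) :
    -1 < inversiveDist c₁ r₁ c₂ r₂ := by
  have h₁ := lt_add_dist_of_not_closedBall_subset h₁₂
  have h₂ := lt_add_dist_of_not_closedBall_subset h₂₁
  rw [dist_comm] at h₂
  rw [inversiveDist, lt_div_iff₀ (by positivity)]
  nlinarith [dist_nonneg (x := c₁) (y := c₂)]

theorem inversiveDist_lt_neg_one (hr₂ : 0 < r₂) (h : closedBall c₂ r₂ ⊆ ball c₁ r₁) :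
    inversiveDist c₁ r₁ c₂ r₂ < -1 := by
  have := add_dist_lt_of_closedBall_subset_ball hr₂ h
  rw [dist_comm] at this
  rw [inversiveDist, div_lt_iff₀ (by nlinarith [dist_nonneg (x := c₁) (y := c₂)])]
  nlinarith [dist_nonneg (x := c₁) (y := c₂)]

end Disks

theorem plane_gram_relation {sx sy cx cy dx dy r r' P Q u K : ℝ} (hr : r ≠ 0) (hr' : r' ≠ 0)
    (hc : cx ^ 2 + cy ^ 2 = r ^ 2) (hd : dx ^ 2 + dy ^ 2 = r' ^ 2) (hs : sx ^ 2 + sy ^ 2 = K)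
    (hsc : sx * cx + sy * cy = -P * r) (hsd : sx * dx + sy * dy = Q * r')
    (hcd : cx * dx + cy * dy = -u * r * r') :
    P ^ 2 + Q ^ 2 - 2 * u * P * Q = (1 - u ^ 2) * K := by
  have hgram : (sx * cx + sy * cy) ^ 2 * (dx ^ 2 + dy ^ 2)
      + (sx * dx + sy * dy) ^ 2 * (cx ^ 2 + cy ^ 2)
      - 2 * (cx * dx + cy * dy) * (sx * cx + sy * cy) * (sx * dx + sy * dy)
      = ((cx ^ 2 + cy ^ 2) * (dx ^ 2 + dy ^ 2) - (cx * dx + cy * dy) ^ 2) * (sx ^ 2 + sy ^ 2) := by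
    ring
  rw [hsc, hsd, hcd, hc, hd, hs] at hgram
  have hrr : r ^ 2 * r' ^ 2 ≠ 0 := by positivity
  exact mul_right_cancel₀ hrr (by linear_combination hgram)

theorem exists_inversion_radii {p cA cB cA' cB' : ℂ} {rA rB rA' rB' : ℝ} (hrA : 0 < rA)
    (hrB : 0 < rB) (hrA' : 0 < rA') (hrB' : 0 < rB') (hpA : p ∈ ball cA rA)
    (hpB : p ∈ ball cB rB) (hpA' : p ∈ sphere cA' rA') (hpB' : p ∈ sphere cB' rB') :
    ∃ R₁ R₂ : ℝ, 0 < R₁ ∧ 0 < R₂ ∧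
      (R₁ * -inversiveDist cA rA cA' rA' + R₂ * inversiveDist cA' rA' cB rB) ^ 2
      + (R₁ * inversiveDist cA rA cB' rB' + R₂ * -inversiveDist cB rB cB' rB') ^ 2
      - 2 * inversiveDist cA' rA' cB' rB'
        * (R₁ * -inversiveDist cA rA cA' rA' + R₂ * inversiveDist cA' rA' cB rB)
        * (R₁ * inversiveDist cA rA cB' rB' + R₂ * -inversiveDist cB rB cB' rB')
      = (1 - inversiveDist cA' rA' cB' rB' ^ 2)
        * (R₁ ^ 2 + R₂ ^ 2 + 2 * inversiveDist cA rA cB rB * R₁ * R₂) := by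
  have hd : ∀ z w : ℂ,
      dist z w ^ 2 = ((z - p).re - (w - p).re) ^ 2 + ((z - p).im - (w - p).im) ^ 2 := by
    intro z w
    rw [Complex.dist_eq, Complex.sq_norm, Complex.normSq_apply]
    simp only [Complex.sub_re, Complex.sub_im]
    ring
  have hp : ∀ z : ℂ, dist p z ^ 2 = (z - p).re ^ 2 + (z - p).im ^ 2 := by
    intro z; rw [hd, sub_self, Complex.zero_re, Complex.zero_im]; ring
  have hA := hp cA
  have hB := hp cB
  have hA' := hp cA'
  have hB' := hp cB'
  rw [mem_sphere.1 hpA'] at hA'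
  rw [mem_sphere.1 hpB'] at hB'
  replace hA : (cA - p).re ^ 2 + (cA - p).im ^ 2 < rA ^ 2 := by
    rw [← hA]; exact pow_lt_pow_left₀ (mem_ball.1 hpA) dist_nonneg two_ne_zero
  replace hB : (cB - p).re ^ 2 + (cB - p).im ^ 2 < rB ^ 2 := by
    rw [← hB]; exact pow_lt_pow_left₀ (mem_ball.1 hpB) dist_nonneg two_ne_zero
  simp only [inversiveDist, hd]
  generalize (cA - p).re = aX, (cA - p).im = aY, (cB - p).re = bX, (cB - p).im = bY,
    (cA' - p).re = cX, (cA' - p).im = cY, (cB' - p).re = dX, (cB' - p).im = dY at *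
  have hN₁ : rA ^ 2 - (aX ^ 2 + aY ^ 2) ≠ 0 := by linarith
  have hN₂ : rB ^ 2 - (bX ^ 2 + bY ^ 2) ≠ 0 := by linarith
  -- Inversion in the unit circle about `p` maps `∂A`, `∂B` to circles of radii `R₁`, `R₂` whose
  -- centers differ by `(sx, sy)`, and `∂Ã`, `∂B̃` to lines with normals `(cX, cY)`, `(dX, dY)`.
  refine ⟨rA / (rA ^ 2 - (aX ^ 2 + aY ^ 2)), rB / (rB ^ 2 - (bX ^ 2 + bY ^ 2)),
    div_pos hrA (by linarith), div_pos hrB (by linarith), ?_⟩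
  apply plane_gram_relation (cx := cX) (cy := cY) (dx := dX) (dy := dY)
    (sx := bX / (rB ^ 2 - (bX ^ 2 + bY ^ 2)) - aX / (rA ^ 2 - (aX ^ 2 + aY ^ 2)))
    (sy := bY / (rB ^ 2 - (bX ^ 2 + bY ^ 2)) - aY / (rA ^ 2 - (aX ^ 2 + aY ^ 2)))
    hrA'.ne' hrB'.ne' hA'.symm hB'.symm
  · field_simp; ring
  · rw [hA']; field_simp; ring
  · rw [hB']; field_simp; ring
  · rw [hA', hB']; field_simp; ring

theorem cos_le_neg_cos_of_abs_sub_pi_le {φ f : ℝ} (hf : f ≤ π) (h : |φ - π| ≤ f) :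
    cos φ ≤ -cos f := by
  have := cos_le_cos_of_nonneg_of_le_pi (abs_nonneg _) hf h
  rwa [cos_abs, cos_sub_pi, le_neg] at this

theorem lt_arccos_of_lt_cos {x b : ℝ} (hb : -1 ≤ b) (hx : x ≤ π) (h : b < cos x) :
    x < arccos b := by
  rcases lt_or_ge x 0 with hx₀ | hx₀
  · exact hx₀.trans_le (arccos_nonneg b)
  · simpa [arccos_cos hx₀ hx] using arccos_lt_arccos hb h (cos_le_one x)

theorem exists_cos_eq_and_cos_sub_eq {a P Q : ℝ} (ha₀ : 0 < a) (ha : a < π)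
    (h : P ^ 2 + Q ^ 2 - 2 * cos a * P * Q = sin a ^ 2) :
    ∃ θ, |θ - a| ≤ π ∧ cos θ = P ∧ cos (θ - a) = Q := by
  have hsa := sin_pos_of_pos_of_lt_pi ha₀ ha
  have hell : (P - Q * cos a) ^ 2 = sin a ^ 2 * (1 - Q ^ 2) := by
    linear_combination h + Q ^ 2 * sin_sq_add_cos_sq a
  have hQ : Q ^ 2 ≤ 1 := by
    by_contra! hQ
    nlinarith [sq_nonneg (P - Q * cos a), mul_pos (pow_pos hsa 2) (sub_pos.2 hQ)]
  obtain ⟨hQ₁, hQ₂⟩ := abs_le.1 ((sq_le_one_iff_abs_le_one Q).1 hQ)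
  set ψ := arccos Q
  have hψ : |ψ| ≤ π := (abs_of_nonneg (arccos_nonneg Q)).trans_le (arccos_le_pi Q)
  have hsin : sin a * sin ψ = |P - Q * cos a| := by
    rw [sin_arccos, ← abs_of_pos hsa, ← sqrt_sq_eq_abs, ← sqrt_mul (sq_nonneg _), ← hell,
      sqrt_sq_eq_abs]
  have hcos : cos ψ = Q := cos_arccos hQ₁ hQ₂
  rcases le_or_gt 0 (P - Q * cos a) with hs | hs
  · refine ⟨a - ψ, ?_, ?_, ?_⟩
    · simpa using hψ
    · rw [cos_sub, hcos, hsin, abs_of_nonneg hs]; ring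
    · simp [hcos]
  · refine ⟨a + ψ, ?_, ?_, ?_⟩
    · simpa using hψ
    · rw [cos_add, hcos, hsin, abs_of_neg hs]; ring
    · simp [hcos]

-- `f₁`, `f₂` are the angles opposite `R₁`, `R₂` in the triangle with sides `1, R₁, R₂` and
-- angle `π - a` opposite `1`; the identity is the real part of
-- `e^{iφ} = R₁ e^{i(φ-f₂)} + R₂ e^{i(φ+f₁)}`.
theorem exists_triangle_angles {a R₁ R₂ : ℝ} (ha₀ : 0 < a) (ha : a < π) (hR₁ : 0 < R₁)
    (hR₂ : 0 < R₂) (h : R₁ ^ 2 + R₂ ^ 2 + 2 * cos a * R₁ * R₂ = 1) :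
    ∃ f₁ f₂, 0 ≤ f₁ ∧ 0 ≤ f₂ ∧ f₁ + f₂ = a ∧ cos f₁ = R₂ + R₁ * cos a ∧
      cos f₂ = R₁ + R₂ * cos a ∧ ∀ φ, cos φ = R₁ * cos (φ - f₂) + R₂ * cos (φ + f₁) := by
  have hsa := sin_pos_of_pos_of_lt_pi ha₀ ha
  have hunit : (R₂ + R₁ * cos a) ^ 2 + (R₁ * sin a) ^ 2 = 1 := by
    linear_combination h + R₁ ^ 2 * sin_sq_add_cos_sq a
  have hc : (R₂ + R₁ * cos a) ^ 2 ≤ 1 := by linarith [sq_nonneg (R₁ * sin a)]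
  obtain ⟨hc₁, hc₂⟩ := abs_le.1 ((sq_le_one_iff_abs_le_one _).1 hc)
  set f₁ := arccos (R₂ + R₁ * cos a)
  have hcos₁ : cos f₁ = R₂ + R₁ * cos a := cos_arccos hc₁ hc₂
  have hsin₁ : sin f₁ = R₁ * sin a := by
    rw [sin_arccos, show 1 - (R₂ + R₁ * cos a) ^ 2 = (R₁ * sin a) ^ 2 by linear_combination -hunit,
      sqrt_sq (by positivity)]
  have hcos₂ : cos (a - f₁) = R₁ + R₂ * cos a := by
    rw [cos_sub, hcos₁, hsin₁]; linear_combination R₁ * sin_sq_add_cos_sq a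
  have hsin₂ : sin (a - f₁) = R₂ * sin a := by
    rw [sin_sub, hcos₁, hsin₁]; ring
  refine ⟨f₁, a - f₁, arccos_nonneg _, ?_, by ring, hcos₁, hcos₂, fun φ => ?_⟩
  · by_contra! hneg
    have := sin_nonpos_of_nonpos_of_neg_pi_le hneg.le (by linarith [arccos_le_pi (R₂ + R₁ * cos a)])
    rw [hsin₂] at this
    nlinarith
  · rw [cos_sub φ (a - f₁), cos_add, hcos₁, hsin₁, hcos₂, hsin₂]
    linear_combination (-cos φ) * h

theorem two_mul_lt_arccos_add_arccos_of_normalized {a b g A B R₁ R₂ : ℝ} (ha₀ : 0 < a)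
    (ha : a < π) (hb : -1 < b) (hg : -1 < g) (hA : 1 < A) (hB : 1 < B) (hR₁ : 0 < R₁)
    (hR₂ : 0 < R₂) (hR : R₁ ^ 2 + R₂ ^ 2 + 2 * cos a * R₁ * R₂ = 1)
    (h : (R₁ * A + R₂ * b) ^ 2 + (R₁ * g + R₂ * B) ^ 2
      - 2 * cos a * (R₁ * A + R₂ * b) * (R₁ * g + R₂ * B) = sin a ^ 2) :
    2 * a < arccos b + arccos g := by
  obtain ⟨f₁, f₂, hf₁, hf₂, hf, hcos₁, hcos₂, hcos⟩ := exists_triangle_angles ha₀ ha hR₁ hR₂ hR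
  obtain ⟨θ, hθa, hP, hQ⟩ := exists_cos_eq_and_cos_sub_eq ha₀ ha h
  obtain ⟨hθa₁, hθa₂⟩ := abs_le.1 hθa
  have hca : -1 < cos a := by simpa using cos_lt_cos_of_nonneg_of_le_pi ha₀.le le_rfl ha
  have hA' := mul_lt_mul_of_pos_left hA hR₁
  have hB' := mul_lt_mul_of_pos_left hB hR₂
  have hb' := mul_lt_mul_of_pos_left hb hR₂
  have hg' := mul_lt_mul_of_pos_left hg hR₁
  have hf₁' : -cos f₁ < R₁ - R₂ := by rw [hcos₁]; nlinarith
  have hf₂' : -cos f₂ < R₂ - R₁ := by rw [hcos₂]; nlinarith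
  -- `hf₁'`, `hf₂'` exclude `cos θ ≤ -cos f₁` and `cos (θ - a) ≤ -cos f₂`, which pins down `θ`.
  have hx : θ + f₁ ≤ π := by
    by_contra! hx
    rcases le_or_gt θ (π + f₁) with hθ | hθ
    · have := cos_le_neg_cos_of_abs_sub_pi_le (φ := θ) (f := f₁) (by linarith)
        (abs_le.2 ⟨by linarith, by linarith⟩)
      linarith
    · have := cos_le_neg_cos_of_abs_sub_pi_le (φ := θ - a) (f := f₂) (by linarith)
        (abs_le.2 ⟨by linarith, by linarith⟩)
      linarith
  have hy : a - θ + f₂ ≤ π := by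
    by_contra! hy
    have := cos_le_neg_cos_of_abs_sub_pi_le (φ := a - θ) (f := f₂) (by linarith)
      (abs_le.2 ⟨by linarith, by linarith⟩)
    rw [← cos_neg, neg_sub] at this
    linarith
  have hbx : b < cos (θ + f₁) := by
    have := hcos θ
    nlinarith [cos_le_one (θ - f₂)]
  have hgy : g < cos (a - θ + f₂) := by
    have := hcos (θ - a)
    rw [show θ - a - f₂ = -(a - θ + f₂) by ring, cos_neg] at this
    nlinarith [cos_le_one (θ - a + f₁)]
  linarith [lt_arccos_of_lt_cos hb.le hx hbx, lt_arccos_of_lt_cos hg.le hy hgy]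

theorem two_mul_arccos_lt_arccos_add_arccos {u b g A B R₁ R₂ : ℝ} (hu₀ : -1 < u) (hu₁ : u < 1)
    (hb : -1 < b) (hg : -1 < g) (hA : 1 < A) (hB : 1 < B) (hR₁ : 0 < R₁) (hR₂ : 0 < R₂)
    (h : (R₁ * A + R₂ * b) ^ 2 + (R₁ * g + R₂ * B) ^ 2
      - 2 * u * (R₁ * A + R₂ * b) * (R₁ * g + R₂ * B)
        = (1 - u ^ 2) * (R₁ ^ 2 + R₂ ^ 2 + 2 * u * R₁ * R₂)) :
    2 * arccos u < arccos b + arccos g := by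
  have hK : 0 < R₁ ^ 2 + R₂ ^ 2 + 2 * u * R₁ * R₂ := by
    nlinarith [mul_pos hR₁ hR₂, sq_nonneg (R₁ - R₂)]
  set k := √(R₁ ^ 2 + R₂ ^ 2 + 2 * u * R₁ * R₂)
  have hk : 0 < k := sqrt_pos.2 hK
  have hk₂ : k ^ 2 = R₁ ^ 2 + R₂ ^ 2 + 2 * u * R₁ * R₂ := sq_sqrt hK.le
  have hcos : cos (arccos u) = u := cos_arccos hu₀.le hu₁.le
  have hsin : sin (arccos u) ^ 2 = 1 - u ^ 2 := by
    rw [sin_arccos, sq_sqrt (by nlinarith)]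
  refine two_mul_lt_arccos_add_arccos_of_normalized (arccos_pos.2 hu₁) (arccos_lt_pi.2 hu₀)
    hb hg hA hB (div_pos hR₁ hk) (div_pos hR₂ hk) ?_ ?_
  · rw [hcos]; field_simp; linear_combination -hk₂
  · rw [hcos, hsin]; field_simp; linear_combination h - (1 - u ^ 2) * hk₂

theorem lem_finlandia_general
    (cA cB cA' cB' : ℂ) (rA rB rA' rB' : ℝ)
    (hrA : 0 < rA) (hrB : 0 < rB) (hrA' : 0 < rA') (hrB' : 0 < rB')
    -- the two pairs overlap:
    (hovAB : (ball cA rA ∩ ball cB rB).Nonempty)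
    (hovAB' : (ball cA' rA' ∩ ball cB' rB').Nonempty)
    -- equal overlap angles:
    (hangle : extAngle cA rA cB rB = extAngle cA' rA' cB' rB')
    -- containments in interiors:
    (hA'A : closedBall cA' rA' ⊆ ball cA rA)
    (hB'B : closedBall cB' rB' ⊆ ball cB rB)
    -- non-containments across:
    (hA'B : ¬ closedBall cA' rA' ⊆ closedBall cB rB)
    (hB'A : ¬ closedBall cB' rB' ⊆ closedBall cA rA) :
    2 * extAngle cA rA cB rB < extAngle cA' rA' cB rB + extAngle cA rA cB' rB' := by
  have hA : closedBall cA' rA' ⊆ closedBall cA rA := hA'A.trans ball_subset_closedBall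
  have hB : closedBall cB' rB' ⊆ closedBall cB rB := hB'B.trans ball_subset_closedBall
  have hBA : ¬ closedBall cB rB ⊆ closedBall cA rA := fun h => hB'A (hB.trans h)
  have hAB : ¬ closedBall cA rA ⊆ closedBall cB rB := fun h => hA'B (hA.trans h)
  have hB'A' : ¬ closedBall cB' rB' ⊆ closedBall cA' rA' := fun h => hB'A (h.trans hA)
  have hA'B' : ¬ closedBall cA' rA' ⊆ closedBall cB' rB' := fun h => hA'B (h.trans hB)
  have hBA' : ¬ closedBall cB rB ⊆ closedBall cA' rA' := fun h => hB'A (hB.trans (h.trans hA))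
  have hAB' : ¬ closedBall cA rA ⊆ closedBall cB' rB' := fun h => hA'B (hA.trans (h.trans hB))
  obtain ⟨p, hpA', hpB'⟩ := nonempty_sphere_inter_sphere hrA' hovAB' hA'B' hB'A'
  obtain ⟨R₁, R₂, hR₁, hR₂, hrel⟩ := exists_inversion_radii hrA hrB hrA' hrB'
    (hA'A (sphere_subset_closedBall hpA')) (hB'B (sphere_subset_closedBall hpB')) hpA' hpB'
  have hu₀ := neg_one_lt_inversiveDist hrA hrB hAB hBA
  have hu₁ := inversiveDist_lt_one hrA hrB hovAB
  have hu : inversiveDist cA' rA' cB' rB' = inversiveDist cA rA cB rB :=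
    arccos_injOn ⟨(neg_one_lt_inversiveDist hrA' hrB' hA'B' hB'A').le,
      (inversiveDist_lt_one hrA' hrB' hovAB').le⟩ ⟨hu₀.le, hu₁.le⟩ hangle.symm
  rw [hu] at hrel
  exact two_mul_arccos_lt_arccos_add_arccos hu₀ hu₁ (neg_one_lt_inversiveDist hrA' hrB hA'B hBA')
    (neg_one_lt_inversiveDist hrA hrB' hAB' hB'A) (lt_neg.1 (inversiveDist_lt_neg_one hrA' hA'A))
    (lt_neg.1 (inversiveDist_lt_neg_one hrB' hB'B)) hR₁ hR₂ hrel

/-- **Lemma (finlandia).**  Let `{A,B}` and `{Ã,B̃}` be pairs of overlapping closed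
disks in `ℂ` in general position with `∠(A,B) = ∠(Ã,B̃)`.  If `Ã` is contained in the
interior of `A`, `B̃` is contained in the interior of `B`, and neither `Ã ⊆ B`
nor `B̃ ⊆ A`, then `2·∠(A,B) < ∠(Ã,B) + ∠(A,B̃)`. -/
theorem lem_finlandia
    (cA cB cA' cB' : ℂ) (rA rB rA' rB' : ℝ)
    (hrA : 0 < rA) (hrB : 0 < rB) (hrA' : 0 < rA') (hrB' : 0 < rB')
    -- the two pairs overlap:
    (hovAB : (ball cA rA ∩ ball cB rB).Nonempty)
    (hovAB' : (ball cA' rA' ∩ ball cB' rB').Nonempty)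
    -- general position: boundary circles from the two collections cross transversely,
    (htAA : CircTrans cA rA cA' rA') (htAB : CircTrans cA rA cB' rB')
    (htBA : CircTrans cB rB cA' rA') (htBB : CircTrans cB rB cB' rB')
    -- and intersection points of one collection avoid the boundaries of the other:
    (hpts : ∀ z ∈ Metric.sphere cA rA ∩ Metric.sphere cB rB,
      z ∉ Metric.sphere cA' rA' ∪ Metric.sphere cB' rB')
    (hpts' : ∀ z ∈ Metric.sphere cA' rA' ∩ Metric.sphere cB' rB',
      z ∉ Metric.sphere cA rA ∪ Metric.sphere cB rB)
    -- equal overlap angles: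
    (hangle : extAngle cA rA cB rB = extAngle cA' rA' cB' rB')
    -- containments in interiors:
    (hA'A : closedBall cA' rA' ⊆ ball cA rA)
    (hB'B : closedBall cB' rB' ⊆ ball cB rB)
    -- non-containments across:
    (hA'B : ¬ closedBall cA' rA' ⊆ closedBall cB rB)
    (hB'A : ¬ closedBall cB' rB' ⊆ closedBall cA rA) :
    2 * extAngle cA rA cB rB < extAngle cA' rA' cB rB + extAngle cA rA cB' rB' :=
  lem_finlandia_general cA cB cA' cB' rA rB rA' rB' hrA hrB hrA' hrB' hovAB hovAB' hangle hA'A hB'B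
    hA'B hB'A
end

section
/- Let {A,B} and {Ã,B̃} be pairs of overlapping closed disks in ℂ in general position, and set E = A ∩ B and Ẽ = Ã ∩ B̃. Then the Jordan curves ∂E and ∂Ẽ meet in exactly 0, 2, 4, or 6 points; in particular they cannot meet in 8 points. -/
/-!
Every point of `∂E ∩ ∂Ẽ` lies on exactly one circle of each pair, and two distinct circles meet
at most twice, so there are at most `8` such points. Parametrize the convex curve `∂E` by a
`2π`-periodic map `γ`; the points of `∂E ∩ ∂Ẽ` are then the zeros in one period of
`t ↦ max (pow_Ã (γ t)) (pow_B̃ (γ t))`, where `pow` is the power of a point with respect to a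
circle. Near such a zero, `γ` runs along one circle of `{A, B}` while the maximum is the power
with respect to one circle of `{Ã, B̃}`; transversality makes its derivative along the circle
nonzero, so every zero is a sign change and the number of zeros is even. Finally, with `8`
points every circle of one pair meets both circles of the other pair on `∂E ∩ ∂Ẽ`, which
forces each of the four circles into the union of the open disks of the other pair; the circle
reaching farthest from the origin cannot be covered in this way.
-/

open Metric Real

open Filter Topology Set
open EuclideanGeometry (Sphere)
open scoped RealInnerProductSpace

/-! ### Sign changes -/

def SignChangeAt (ψ : ℝ → ℝ) (t : ℝ) : Prop :=
  ∃ e : ℝ, (∀ᶠ u in 𝓝[<] t, e * ψ u < 0) ∧ ∀ᶠ u in 𝓝[>] t, 0 < e * ψ u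

namespace SignChangeAt

variable {ψ φ : ℝ → ℝ} {t : ℝ}

lemma exists_mul_neg (h : SignChangeAt ψ t) {p q : ℝ → Prop} (hp : ∀ᶠ u in 𝓝[<] t, p u)
    (hq : ∀ᶠ u in 𝓝[>] t, q u) : ∃ c d, p c ∧ q d ∧ ψ c * ψ d < 0 := by
  obtain ⟨e, hl, hr⟩ := h
  obtain ⟨c, hc, hpc⟩ := (hl.and hp).exists
  obtain ⟨d, hd, hqd⟩ := (hr.and hq).exists
  refine ⟨c, d, hpc, hqd, ?_⟩
  by_contra! h
  nlinarith [mul_neg_of_neg_of_pos hc hd, mul_nonneg (mul_self_nonneg e) h]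

lemma exists_ne_zero (h : SignChangeAt ψ t) : ∃ u, ψ u ≠ 0 := by
  obtain ⟨e, hl, -⟩ := h
  obtain ⟨u, hu⟩ := hl.exists
  exact ⟨u, fun h0 => by simp [h0] at hu⟩

lemma congr (h : SignChangeAt ψ t) (hφ : φ =ᶠ[𝓝 t] ψ) : SignChangeAt φ t := by
  obtain ⟨e, hl, hr⟩ := h
  exact ⟨e, (hl.and (nhdsWithin_le_nhds hφ)).mono fun u hu => hu.2 ▸ hu.1,
    (hr.and (nhdsWithin_le_nhds hφ)).mono fun u hu => hu.2 ▸ hu.1⟩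

lemma max_of_eventually_neg (h : SignChangeAt ψ t) (hφ : ∀ᶠ u in 𝓝 t, φ u < 0) :
    SignChangeAt (fun u => max (ψ u) (φ u)) t := by
  obtain ⟨e, hl, hr⟩ := h
  refine ⟨e, ?_, ?_⟩
  · filter_upwards [hl, nhdsWithin_le_nhds hφ] with u hψ hφ
    rcases le_total (ψ u) (φ u) with h | h
    · rw [max_eq_right h]; nlinarith
    · rwa [max_eq_left h]
  · filter_upwards [hr, nhdsWithin_le_nhds hφ] with u hψ hφ
    rcases le_total (ψ u) (φ u) with h | h
    · rw [max_eq_right h]; nlinarith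
    · rwa [max_eq_left h]

lemma of_hasDerivAt {m : ℝ} (hd : HasDerivAt ψ m t) (hm : m ≠ 0) (h0 : ψ t = 0) :
    SignChangeAt ψ t := by
  have hslope : ∀ᶠ u in 𝓝[≠] t, 0 < m * slope ψ t u :=
    ((hasDerivAt_iff_tendsto_slope.mp hd).const_mul m).eventually
      (lt_mem_nhds (mul_self_pos.2 hm))
  have hψ (u : ℝ) : ψ u = (u - t) * slope ψ t u := by
    simpa [h0] using (sub_smul_slope ψ t u).symm
  refine ⟨m, ?_, ?_⟩
  · filter_upwards [nhdsLT_le_nhdsNE t hslope, self_mem_nhdsWithin] with u hu (hut : u < t)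
    rw [hψ u]; nlinarith
  · filter_upwards [nhdsGT_le_nhdsNE t hslope, self_mem_nhdsWithin] with u hu (hut : t < u)
    rw [hψ u]; nlinarith

lemma comp_of_injOn {S Θ : ℝ → ℝ} {a b : ℝ} (h : SignChangeAt S (Θ t)) (hab : Icc a b ∈ 𝓝 t)
    (hc : ContinuousOn Θ (Icc a b)) (hinj : InjOn Θ (Icc a b)) : SignChangeAt (S ∘ Θ) t := by
  have ht : t ∈ Icc a b := mem_of_mem_nhds hab
  have hl : ∀ᶠ u in 𝓝[<] t, u ∈ Icc a b ∧ u < t :=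
    Eventually.and (nhdsWithin_le_nhds hab) self_mem_nhdsWithin
  have hr : ∀ᶠ u in 𝓝[>] t, u ∈ Icc a b ∧ t < u :=
    Eventually.and (nhdsWithin_le_nhds hab) self_mem_nhdsWithin
  have tendsto_within {l : Filter ℝ} {s : Set ℝ} (hl : l ≤ 𝓝 t) (hs : ∀ᶠ u in l, Θ u ∈ s) :
      Tendsto Θ l (𝓝[s] (Θ t)) :=
    tendsto_nhdsWithin_of_tendsto_nhds_of_eventually_within _
      ((hc.continuousAt hab).mono_left hl) hs
  obtain ⟨e, hL, hR⟩ := h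
  rcases hc.strictMonoOn_of_injOn_Icc' (ht.1.trans ht.2) hinj with hmono | hanti
  · refine ⟨e, (tendsto_within nhdsWithin_le_nhds ?_).eventually hL,
      (tendsto_within nhdsWithin_le_nhds ?_).eventually hR⟩
    · exact hl.mono fun u hu => hmono hu.1 ht hu.2
    · exact hr.mono fun u hu => hmono ht hu.1 hu.2
  · refine ⟨-e, ((tendsto_within nhdsWithin_le_nhds ?_).eventually hR).mono fun u hu => ?_,
      ((tendsto_within nhdsWithin_le_nhds ?_).eventually hL).mono fun u hu => ?_⟩
    · exact hl.mono fun u hu => hanti hu.1 ht hu.2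
    · simp only [Function.comp_apply, neg_mul]; linarith
    · exact hr.mono fun u hu => hanti ht hu.1 hu.2
    · simp only [Function.comp_apply, neg_mul]; linarith

end SignChangeAt

lemma ContinuousOn.mul_pos_of_forall_ne_zero {ψ : ℝ → ℝ} {a b : ℝ}
    (hc : ContinuousOn ψ (Icc a b)) (hab : a ≤ b) (h : ∀ t ∈ Icc a b, ψ t ≠ 0) : 0 < ψ a * ψ b := by
  by_contra! hneg
  have h0 : (0 : ℝ) ∈ uIcc (ψ a) (ψ b) := by
    rcases mul_nonpos_iff.mp hneg with h | h
    exacts [mem_uIcc.2 (Or.inr ⟨h.2, h.1⟩), mem_uIcc.2 (Or.inl ⟨h.1, h.2⟩)]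
  rw [← uIcc_of_le hab] at hc h
  obtain ⟨t, ht, ht0⟩ := intermediate_value_uIcc hc h0
  exact h t ht ht0

lemma neg_one_pow_card_zeros_mul_pos {ψ : ℝ → ℝ} (hc : Continuous ψ)
    (hcross : ∀ t, ψ t = 0 → SignChangeAt ψ t) {a : ℝ} (ha : ψ a ≠ 0) (s : Finset ℝ) :
    ∀ b, a < b → ψ b ≠ 0 → (∀ t, t ∈ Ioo a b ∧ ψ t = 0 ↔ t ∈ s) →
      0 < (-1) ^ s.card * (ψ a * ψ b) := by
  induction s using Finset.induction_on_max with
  | empty =>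
    intro b hab hb hs
    simpa using hc.continuousOn.mul_pos_of_forall_ne_zero hab.le fun t ht ht0 => by
      rcases eq_or_ne t a with rfl | hta; · exact ha ht0
      rcases eq_or_ne t b with rfl | htb; · exact hb ht0
      exact Finset.notMem_empty t
        ((hs t).mp ⟨⟨lt_of_le_of_ne ht.1 hta.symm, lt_of_le_of_ne ht.2 htb⟩, ht0⟩)
  | insert z s hlt ih =>
    intro b hab hb hmem
    have hz := (hmem z).mpr (Finset.mem_insert_self z s)
    -- `c` and `d` straddle `z`, with no zero in `[d, b]` and exactly the zeros `s` in `(a, c)`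
    obtain ⟨c, d, ⟨hcI, hsc⟩, hdI, hcd⟩ := (hcross z hz.2).exists_mul_neg
      (Eventually.and (Ioo_mem_nhdsLT hz.1.1)
        ((eventually_all_finset s).2 fun x hx => Ioo_mem_nhdsLT (hlt x hx)))
      (Ioo_mem_nhdsGT hz.1.2)
    have hac : 0 < (-1) ^ s.card * (ψ a * ψ c) := by
      refine ih c hcI.1 (left_ne_zero_of_mul hcd.ne) fun t => ⟨fun ht => ?_, fun ht => ?_⟩
      · rcases Finset.mem_insert.mp
          ((hmem t).mp ⟨⟨ht.1.1, ht.1.2.trans (hcI.2.trans hz.1.2)⟩, ht.2⟩) with rfl | hts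
        exacts [absurd ht.1.2 (not_lt.2 hcI.2.le), hts]
      · have := (hmem t).mpr (Finset.mem_insert_of_mem ht)
        exact ⟨⟨this.1.1, (hsc t ht).1⟩, this.2⟩
    have hdb : 0 < ψ d * ψ b := by
      refine hc.continuousOn.mul_pos_of_forall_ne_zero hdI.2.le fun t ht ht0 => ?_
      rcases eq_or_ne t b with rfl | htb; · exact hb ht0
      rcases Finset.mem_insert.mp
        ((hmem t).mp ⟨⟨hz.1.1.trans (hdI.1.trans_le ht.1), lt_of_le_of_ne ht.2 htb⟩, ht0⟩)
        with rfl | hts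
      exacts [absurd ht.1 (not_le.2 hdI.1), lt_irrefl t ((hlt t hts).trans (hdI.1.trans_le ht.1))]
    rw [Finset.card_insert_of_notMem fun hzs => lt_irrefl z (hlt z hzs), pow_succ]
    nlinarith [mul_pos hac hdb]

lemma Function.Periodic.even_ncard_zeros {ψ : ℝ → ℝ} {P a : ℝ} (hper : Function.Periodic ψ P)
    (hP : 0 < P) (hc : Continuous ψ) (hcross : ∀ t, ψ t = 0 → SignChangeAt ψ t) (ha : ψ a ≠ 0)
    (hfin : {t ∈ Ico a (a + P) | ψ t = 0}.Finite) :
    Even {t ∈ Ico a (a + P) | ψ t = 0}.ncard := by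
  have hIoo : {t ∈ Ico a (a + P) | ψ t = 0} = {t ∈ Ioo a (a + P) | ψ t = 0} := by
    ext t
    exact ⟨fun ⟨ht, h0⟩ => ⟨⟨lt_of_le_of_ne ht.1 fun h => ha (h ▸ h0), ht.2⟩, h0⟩,
      fun ⟨ht, h0⟩ => ⟨Ioo_subset_Ico_self ht, h0⟩⟩
  have hpos := neg_one_pow_card_zeros_mul_pos hc hcross ha hfin.toFinset (a + P) (by linarith)
    (by rwa [hper a]) fun t => by rw [hfin.mem_toFinset, hIoo]; rfl
  rw [hper a, ← Set.ncard_eq_toFinset_card _ hfin] at hpos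
  refine (Nat.even_or_odd _).resolve_right fun hodd => ?_
  rw [hodd.neg_one_pow] at hpos
  nlinarith [mul_self_pos.2 ha]

/-! ### Circles -/

lemma dist_eq_add_or_abs_sub_of_inner_eq_zero {z c₁ c₂ : ℂ} {r₁ r₂ : ℝ} (h₁ : dist z c₁ = r₁)
    (h₂ : dist z c₂ = r₂) (h : ⟪z - c₂, (z - c₁) * Complex.I⟫ = 0) :
    dist c₁ c₂ = r₁ + r₂ ∨ dist c₁ c₂ = |r₁ - r₂| := by
  have hsq (w c : ℂ) : dist w c ^ 2 = (w.re - c.re) ^ 2 + (w.im - c.im) ^ 2 := by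
    rw [Complex.dist_eq, Complex.sq_norm, Complex.normSq_apply]
    simp only [Complex.sub_re, Complex.sub_im]
    ring
  have hk : (z.re - c₁.re) * (z.im - c₂.im) - (z.im - c₁.im) * (z.re - c₂.re) = 0 := by
    simp only [Complex.inner, map_sub, Complex.mul_re, Complex.sub_re, Complex.I_re, mul_zero,
      Complex.sub_im, Complex.I_im, mul_one, zero_sub, neg_sub, Complex.conj_re, Complex.mul_im,
      add_zero, Complex.conj_im, sub_neg_eq_add] at h
    linarith
  -- `(d² - (r₁ + r₂)²)(d² - (r₁ - r₂)²)` is `-4` times the square of the cross product `hk`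
  have hprod : (dist c₁ c₂ ^ 2 - (r₁ + r₂) ^ 2) * (dist c₁ c₂ ^ 2 - (r₁ - r₂) ^ 2) = 0 := by
    rw [show ∀ D : ℝ, (D - (r₁ + r₂) ^ 2) * (D - (r₁ - r₂) ^ 2) =
      (D - r₁ ^ 2 - r₂ ^ 2) ^ 2 - 4 * (r₁ ^ 2 * r₂ ^ 2) from fun D => by ring, hsq c₁ c₂, ← h₁,
      ← h₂, hsq z c₁, hsq z c₂]
    linear_combination
      (-4 * ((z.re - c₁.re) * (z.im - c₂.im) - (z.im - c₁.im) * (z.re - c₂.re))) * hk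
  have hr₁ : 0 ≤ r₁ := h₁ ▸ dist_nonneg
  have hr₂ : 0 ≤ r₂ := h₂ ▸ dist_nonneg
  rcases mul_eq_zero.mp hprod with h | h
  · exact Or.inl ((sq_eq_sq₀ dist_nonneg (by positivity)).mp (sub_eq_zero.mp h))
  · refine Or.inr ((sq_eq_sq₀ dist_nonneg (abs_nonneg _)).mp ?_)
    rw [sq_abs]
    exact sub_eq_zero.mp h

lemma signChangeAt_power_circleMap {c₁ c₂ : ℂ} {r₁ r₂ θ : ℝ} (hr₁ : 0 ≤ r₁)
    (hθ : circleMap c₁ r₁ θ ∈ sphere c₂ r₂) (h₁ : dist c₁ c₂ ≠ r₁ + r₂)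
    (h₂ : dist c₁ c₂ ≠ |r₁ - r₂|) :
    SignChangeAt (fun θ => Sphere.power ⟨c₂, r₂⟩ (circleMap c₁ r₁ θ)) θ := by
  have hd : HasDerivAt (fun θ => Sphere.power ⟨c₂, r₂⟩ (circleMap c₁ r₁ θ))
      (2 * ⟪circleMap c₁ r₁ θ - c₂, (circleMap c₁ r₁ θ - c₁) * Complex.I⟫) θ := by
    simpa [Sphere.power, dist_eq_norm, circleMap_sub_center] using
      (((hasDerivAt_circleMap c₁ r₁ θ).sub_const c₂).norm_sq).sub_const (r₂ ^ 2)
  refine SignChangeAt.of_hasDerivAt hd (fun hm => ?_)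
    ((Sphere.power_eq_zero_iff_mem_sphere (dist_nonneg.trans_eq (mem_sphere.mp hθ))).mpr hθ)
  rcases dist_eq_add_or_abs_sub_of_inner_eq_zero (circleMap_mem_sphere c₁ hr₁ θ) hθ
    (by linarith) with h | h
  exacts [h₁ h, h₂ h]

lemma exists_circleMap_lift {γ : ℝ → ℂ} {c : ℂ} {r t θ₀ : ℝ} (hr : 0 < r) (hγ : Continuous γ)
    (h₀ : circleMap c r θ₀ = γ t) :
    ∃ Θ : ℝ → ℝ, Θ t = θ₀ ∧ (∀ᶠ u in 𝓝 t, ContinuousAt Θ u) ∧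
      ∀ u, γ u ∈ sphere c r → circleMap c r (Θ u) = γ u := by
  -- rotating by `-θ₀` puts `γ t - c` on the positive real axis, away from the branch cut of `arg`
  set w : ℝ → ℂ := fun u => (γ u - c) * Complex.exp (-(θ₀ * Complex.I))
  have hw : Continuous w := by fun_prop
  have hwt : w t = r := by
    simp only [w, ← h₀, circleMap, add_sub_cancel_left, mul_assoc, ← Complex.exp_add,
      add_neg_cancel, Complex.exp_zero, mul_one]
  refine ⟨fun u => θ₀ + Complex.arg (w u), by simp [hwt, Complex.arg_ofReal_of_nonneg hr.le], ?_,
    fun u hu => ?_⟩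
  · have hslit : ∀ᶠ u in 𝓝 t, w u ∈ Complex.slitPlane :=
      hw.continuousAt.eventually_mem (Complex.isOpen_slitPlane.mem_nhds
        (hwt ▸ Complex.ofReal_mem_slitPlane.mpr hr))
    exact hslit.mono fun u hu =>
      continuousAt_const.add ((Complex.continuousAt_arg hu).comp hw.continuousAt)
  · have hnorm : ‖w u‖ = r := by
      simp [w, Complex.norm_exp, ← dist_eq_norm, mem_sphere.mp hu]
    calc circleMap c r (θ₀ + Complex.arg (w u))
        = c + Complex.exp (θ₀ * Complex.I) *
            (‖w u‖ * Complex.exp (Complex.arg (w u) * Complex.I)) := by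
          rw [hnorm, circleMap]; push_cast; rw [add_mul, Complex.exp_add]; ring
      _ = γ u := by
          rw [Complex.norm_mul_exp_arg_mul_I, mul_left_comm, ← Complex.exp_add, add_neg_cancel,
            Complex.exp_zero, mul_one, add_sub_cancel]

lemma signChangeAt_power_comp {γ : ℝ → ℂ} {c₁ c₂ : ℂ} {r₁ r₂ t a b : ℝ} (hr₁ : 0 < r₁)
    (hγ : Continuous γ) (hab : Icc a b ∈ 𝓝 t) (hinj : InjOn γ (Icc a b))
    (hsph : ∀ᶠ u in 𝓝 t, γ u ∈ sphere c₁ r₁) (ht : γ t ∈ sphere c₂ r₂)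
    (h₁ : dist c₁ c₂ ≠ r₁ + r₂) (h₂ : dist c₁ c₂ ≠ |r₁ - r₂|) :
    SignChangeAt (fun u => Sphere.power ⟨c₂, r₂⟩ (γ u)) t := by
  obtain ⟨θ₀, hθ₀⟩ : γ t ∈ range (circleMap c₁ r₁) := by
    rw [range_circleMap, abs_of_pos hr₁]; exact hsph.self_of_nhds
  obtain ⟨Θ, hΘt, hΘc, hΘ⟩ := exists_circleMap_lift hr₁ hγ hθ₀
  obtain ⟨a', b', -, hI, hIsub⟩ := exists_Icc_mem_subset_of_mem_nhds
    ((Eventually.and hab (hΘc.and hsph)) : ∀ᶠ u in 𝓝 t, _)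
  have hS := signChangeAt_power_circleMap hr₁.le (hθ₀ ▸ ht) h₁ h₂
  rw [← hΘt] at hS
  refine (hS.comp_of_injOn hI (fun u hu => (hIsub hu).2.1.continuousWithinAt)
    (fun u hu v hv huv => hinj (hIsub hu).1 (hIsub hv).1 ?_)).congr ?_
  · rw [← hΘ u (hIsub hu).2.2, ← hΘ v (hIsub hv).2.2, huv]
  · filter_upwards [hI] with u hu
    simp [hΘ u (hIsub hu).2.2]

lemma CircTrans.encard_sphere_inter_sphere_le_two {c₁ c₂ : ℂ} {r₁ r₂ : ℝ}
    (h : CircTrans c₁ r₁ c₂ r₂) : (sphere c₁ r₁ ∩ sphere c₂ r₂).encard ≤ 2 := by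
  rcases (sphere c₁ r₁ ∩ sphere c₂ r₂).eq_empty_or_nonempty with he | hne
  · simp [he]
  have hs : (⟨c₁, r₁⟩ : Sphere ℂ) ≠ ⟨c₂, r₂⟩ := fun heq => by
    cases heq
    exact (h hne).2 (by simp)
  rcases (sphere c₁ r₁ ∩ sphere c₂ r₂).subsingleton_or_nontrivial with hsub | ⟨p₁, hp₁, p₂, hp₂, hp⟩
  · exact (encard_le_one_iff_subsingleton.mpr hsub).trans (by norm_num)
  calc _ ≤ ({p₁, p₂} : Set ℂ).encard := encard_le_encard fun p hp' =>
        EuclideanGeometry.eq_of_mem_sphere_of_mem_sphere_of_finrank_eq_two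
          Complex.finrank_real_complex hs hp hp₁.1 hp₂.1 hp'.1 hp₁.2 hp₂.2 hp'.2
    _ = 2 := encard_pair hp

lemma exists_mem_sphere_norm_eq_add {E : Type*} [NormedAddCommGroup E] [NormedSpace ℝ E]
    [Nontrivial E] (c : E) {r : ℝ} (hr : 0 ≤ r) : ∃ y ∈ sphere c r, ‖y‖ = ‖c‖ + r := by
  rcases eq_or_ne c 0 with rfl | hc
  · obtain ⟨y, hy⟩ := exists_norm_eq E hr
    exact ⟨y, by simpa using hy, by simpa using hy⟩
  have hc' : 0 < ‖c‖ := norm_pos_iff.mpr hc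
  refine ⟨(1 + r / ‖c‖) • c, ?_, ?_⟩
  · rw [mem_sphere_iff_norm, add_smul, one_smul, add_sub_cancel_left, norm_smul, Real.norm_eq_abs,
      abs_of_nonneg (by positivity), div_mul_cancel₀ _ hc'.ne']
  · rw [norm_smul, Real.norm_eq_abs, abs_of_nonneg (by positivity), add_mul, one_mul,
      div_mul_cancel₀ _ hc'.ne']

lemma not_forall_sphere_subset_iUnion_ball {E : Type*} [NormedAddCommGroup E] [NormedSpace ℝ E]
    [Nontrivial E] {ι : Type*} [Finite ι] [Nonempty ι] (c : ι → E) (r : ι → ℝ)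
    (hr : ∀ i, 0 ≤ r i) : ¬ ∀ i, sphere (c i) (r i) ⊆ ⋃ j, ball (c j) (r j) := by
  intro h
  -- a point of norm `‖c i‖ + r i` lies in no ball when `i` maximizes `‖c i‖ + r i`
  obtain ⟨i, hi⟩ := Finite.exists_max fun i => ‖c i‖ + r i
  obtain ⟨y, hy, hny⟩ := exists_mem_sphere_norm_eq_add (c i) (hr i)
  obtain ⟨j, hj⟩ := mem_iUnion.mp (h i hy)
  have := norm_le_norm_add_norm_sub' y (c j)
  rw [mem_ball_iff_norm] at hj
  linarith [hi j]

lemma sphere_subset_ball_union_ball {c c₁ c₂ : ℂ} {r r₁ r₂ : ℝ} (hr : 0 ≤ r)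
    (h₁ : sphere c r ∩ sphere c₁ r₁ ⊆ closedBall c₂ r₂)
    (h₂ : sphere c r ∩ sphere c₂ r₂ ⊆ closedBall c₁ r₁)
    (h₁₂ : sphere c r ∩ sphere c₁ r₁ ∩ sphere c₂ r₂ = ∅)
    (hne : (sphere c r ∩ sphere c₁ r₁).Nonempty) :
    sphere c r ⊆ ball c₁ r₁ ∪ ball c₂ r₂ := by
  have hb₂ : sphere c r ∩ sphere c₁ r₁ ⊆ ball c₂ r₂ := fun z hz =>
    closedBall_sdiff_sphere (x := c₂) ▸ ⟨h₁ hz, fun h => h₁₂.subset ⟨hz, h⟩⟩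
  have hb₁ : sphere c r ∩ sphere c₂ r₂ ⊆ ball c₁ r₁ := fun z hz =>
    closedBall_sdiff_sphere (x := c₁) ▸ ⟨h₂ hz, fun h => h₁₂.subset ⟨⟨hz.1, h⟩, hz.2⟩⟩
  -- by `hb₁` and `hb₂` the connected sphere avoids the frontier of `ball c₁ r₁ ∪ ball c₂ r₂`
  have hconn :=
    (isConnected_sphere (by rw [Complex.rank_real_complex]; norm_num) c hr).isPreconnected
  refine hconn.subset_left_of_subset_union (isOpen_ball.union isOpen_ball)
    (isClosed_closedBall.union isClosed_closedBall).isOpen_compl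
    (disjoint_compl_right_iff_subset.mpr
      (union_subset_union ball_subset_closedBall ball_subset_closedBall))
    (fun z hz => ?_) (hne.mono fun z hz => ⟨hz.1, Or.inr (hb₂ hz)⟩)
  by_cases hb : z ∈ ball c₁ r₁ ∪ ball c₂ r₂
  · exact Or.inl hb
  rw [mem_union, not_or] at hb
  refine Or.inr fun hcb => hcb.elim (fun h => hb.2 (hb₂ ⟨hz, ?_⟩)) fun h => hb.1 (hb₁ ⟨hz, ?_⟩)
  exacts [closedBall_sdiff_ball (x := c₁) ▸ ⟨h, hb.1⟩, closedBall_sdiff_ball (x := c₂) ▸ ⟨h, hb.2⟩]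

/-! ### Eyes -/

lemma max_power_eq_zero_iff {P : Type*} [MetricSpace P] {c₁ c₂ : P} {r₁ r₂ : ℝ}
    (hr₁ : 0 ≤ r₁) (hr₂ : 0 ≤ r₂) {z : P} :
    max (Sphere.power ⟨c₁, r₁⟩ z) (Sphere.power ⟨c₂, r₂⟩ z) = 0 ↔
      z ∈ (closedBall c₁ r₁ ∩ closedBall c₂ r₂) \ (ball c₁ r₁ ∩ ball c₂ r₂) := by
  rw [eq_iff_le_not_lt, max_le_iff, max_lt_iff, Sphere.power_nonpos_iff_dist_center_le_radius hr₁,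
    Sphere.power_nonpos_iff_dist_center_le_radius hr₂,
    Sphere.power_neg_iff_dist_center_lt_radius hr₁, Sphere.power_neg_iff_dist_center_lt_radius hr₂]
  rfl

section Eye

variable {V : Type*} [NormedAddCommGroup V] [NormedSpace ℝ V] {c₁ c₂ : V} {r₁ r₂ : ℝ}

lemma frontier_closedBall_inter_closedBall (hr₁ : r₁ ≠ 0) (hr₂ : r₂ ≠ 0) :
    frontier (closedBall c₁ r₁ ∩ closedBall c₂ r₂) =
      (closedBall c₁ r₁ ∩ closedBall c₂ r₂) \ (ball c₁ r₁ ∩ ball c₂ r₂) := by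
  rw [frontier, (isClosed_closedBall.inter isClosed_closedBall).closure_eq, interior_inter,
    interior_closedBall _ hr₁, interior_closedBall _ hr₂]

lemma frontier_closedBall_inter_closedBall_subset (hr₁ : r₁ ≠ 0) (hr₂ : r₂ ≠ 0) :
    frontier (closedBall c₁ r₁ ∩ closedBall c₂ r₂) ⊆ sphere c₁ r₁ ∪ sphere c₂ r₂ := by
  rw [frontier_closedBall_inter_closedBall hr₁ hr₂, ← closedBall_sdiff_ball,
    ← closedBall_sdiff_ball]
  rintro z ⟨⟨h₁, h₂⟩, h⟩
  by_cases hb : z ∈ ball c₁ r₁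
  exacts [Or.inr ⟨h₂, fun hb₂ => h ⟨hb, hb₂⟩⟩, Or.inl ⟨h₁, hb⟩]

lemma mem_sphere_and_mem_ball_of_mem_frontier (hr₁ : r₁ ≠ 0) (hr₂ : r₂ ≠ 0) {z : V}
    (hz : z ∈ frontier (closedBall c₁ r₁ ∩ closedBall c₂ r₂))
    (hz' : z ∉ sphere c₁ r₁ ∩ sphere c₂ r₂) :
    z ∈ sphere c₁ r₁ ∧ z ∈ ball c₂ r₂ ∨ z ∈ sphere c₂ r₂ ∧ z ∈ ball c₁ r₁ := by
  have hE := (isClosed_closedBall.inter isClosed_closedBall).frontier_subset hz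
  rcases frontier_closedBall_inter_closedBall_subset hr₁ hr₂ hz with h | h
  · exact Or.inl ⟨h, closedBall_sdiff_sphere (x := c₂) ▸ ⟨hE.2, fun h₂ => hz' ⟨h, h₂⟩⟩⟩
  · exact Or.inr ⟨h, closedBall_sdiff_sphere (x := c₁) ▸ ⟨hE.1, fun h₁ => hz' ⟨h₁, h⟩⟩⟩

end Eye

lemma exists_periodic_bijOn_frontier {s : Set ℂ} (hc : Convex ℝ s) (hne : (interior s).Nonempty)
    (hb : Bornology.IsBounded s) :
    ∃ γ : ℝ → ℂ, Continuous γ ∧ Function.Periodic γ (2 * π) ∧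
      ∀ a, BijOn γ (Ico a (a + 2 * π)) (frontier s) := by
  obtain ⟨h, -, -, hfr⟩ := exists_homeomorph_image_interior_closure_frontier_eq_unitBall hc hne hb
  refine ⟨h.symm ∘ circleMap 0 1, h.symm.continuous.comp (continuous_circleMap 0 1),
    fun t => congrArg h.symm (periodic_circleMap 0 1 t), fun a => ?_⟩
  have hcirc : BijOn (circleMap 0 1) (Ico a (a + 2 * π)) (sphere 0 1) := by
    refine ⟨fun θ _ => circleMap_mem_sphere 0 zero_le_one θ,
      injOn_circleMap_of_abs_sub_le' one_ne_zero (by linarith), fun z hz => ?_⟩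
    obtain ⟨θ, rfl⟩ : z ∈ range (circleMap 0 1) := by rwa [range_circleMap, abs_one]
    obtain ⟨θ', hθ', hθθ'⟩ := (periodic_circleMap 0 1).exists_mem_Ico two_pi_pos θ a
    exact ⟨θ', hθ', hθθ'.symm⟩
  have hsymm : h.symm '' sphere 0 1 = frontier s := by
    rw [← hfr, h.image_symm, h.preimage_image]
  exact (hsymm ▸ h.symm.injective.injOn.bijOn_image).comp hcirc

lemma signChangeAt_max_power_comp_of_mem_sphere {γ : ℝ → ℂ} {c₁ c₂ c₁' c₂' : ℂ}
    {r₁ r₂ r₁' r₂' t a b : ℝ} (hr₁ : 0 < r₁) (hr₂' : 0 ≤ r₂') (hγ : Continuous γ)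
    (hab : Icc a b ∈ 𝓝 t) (hinj : InjOn γ (Icc a b))
    (hγ₁₂ : ∀ u, γ u ∈ sphere c₁ r₁ ∪ sphere c₂ r₂) (h₂ : γ t ∈ ball c₂ r₂)
    (h₁' : γ t ∈ sphere c₁' r₁') (h₂' : γ t ∈ ball c₂' r₂') (htr : CircTrans c₁ r₁ c₁' r₁') :
    SignChangeAt (fun u => max (Sphere.power ⟨c₁', r₁'⟩ (γ u)) (Sphere.power ⟨c₂', r₂'⟩ (γ u)))
      t := by
  have hsph : ∀ᶠ u in 𝓝 t, γ u ∈ sphere c₁ r₁ :=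
    (hγ.continuousAt.eventually_mem (isOpen_ball.mem_nhds h₂)).mono fun u hu =>
      (hγ₁₂ u).resolve_right fun hs => sphere_disjoint_ball.ne_of_mem hs hu rfl
  obtain ⟨hd₁, hd₂⟩ := htr ⟨γ t, hsph.self_of_nhds, h₁'⟩
  exact (signChangeAt_power_comp hr₁ hγ hab hinj hsph h₁' hd₁ hd₂).max_of_eventually_neg
    ((hγ.continuousAt.eventually_mem (isOpen_ball.mem_nhds h₂')).mono fun u hu =>
      (Sphere.power_neg_iff_dist_center_lt_radius hr₂').mpr hu)

lemma Set.nonempty_and_subset_of_ncard_eq_eight {α : Type*} {T Q₁ Q₂ Q₃ Q₄ : Set α}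
    (hT : T ⊆ Q₁ ∪ Q₂ ∪ Q₃ ∪ Q₄) (h₁ : Q₁.encard ≤ 2) (h₂ : Q₂.encard ≤ 2) (h₃ : Q₃.encard ≤ 2)
    (h₄ : Q₄.encard ≤ 2) (h8 : T.ncard = 8) :
    (Q₁.Nonempty ∧ Q₁ ⊆ T) ∧ (Q₂.Nonempty ∧ Q₂ ⊆ T) ∧ (Q₃.Nonempty ∧ Q₃ ⊆ T) ∧
      (Q₄.Nonempty ∧ Q₄ ⊆ T) := by
  obtain ⟨f₁, n₁⟩ := (encard_le_coe_iff_finite_ncard_le (k := 2)).mp h₁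
  obtain ⟨f₂, n₂⟩ := (encard_le_coe_iff_finite_ncard_le (k := 2)).mp h₂
  obtain ⟨f₃, n₃⟩ := (encard_le_coe_iff_finite_ncard_le (k := 2)).mp h₃
  obtain ⟨f₄, n₄⟩ := (encard_le_coe_iff_finite_ncard_le (k := 2)).mp h₄
  have hfin : (Q₁ ∪ Q₂ ∪ Q₃ ∪ Q₄).Finite := ((f₁.union f₂).union f₃).union f₄
  have hU : (Q₁ ∪ Q₂ ∪ Q₃ ∪ Q₄).ncard ≤ Q₁.ncard + Q₂.ncard + Q₃.ncard + Q₄.ncard :=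
    (ncard_union_le _ _).trans (Nat.add_le_add_right ((ncard_union_le _ _).trans
      (Nat.add_le_add_right (ncard_union_le _ _) _)) _)
  have hle := ncard_le_ncard hT hfin
  have heq : T = Q₁ ∪ Q₂ ∪ Q₃ ∪ Q₄ := eq_of_subset_of_ncard_le hT (by omega) hfin
  refine ⟨⟨nonempty_of_ncard_ne_zero (by omega), ?_⟩, ⟨nonempty_of_ncard_ne_zero (by omega), ?_⟩,
    ⟨nonempty_of_ncard_ne_zero (by omega), ?_⟩, ⟨nonempty_of_ncard_ne_zero (by omega), ?_⟩⟩ <;>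
  rw [heq] <;> intro z hz <;> simp [hz]

section TwoEyes

variable {cA cB cA' cB' : ℂ} {rA rB rA' rB' : ℝ}

lemma frontier_inter_frontier_subset (hrA : rA ≠ 0) (hrB : rB ≠ 0) (hrA' : rA' ≠ 0)
    (hrB' : rB' ≠ 0) :
    frontier (closedBall cA rA ∩ closedBall cB rB) ∩
        frontier (closedBall cA' rA' ∩ closedBall cB' rB') ⊆
      sphere cA rA ∩ sphere cA' rA' ∪ sphere cA rA ∩ sphere cB' rB' ∪
        sphere cB rB ∩ sphere cA' rA' ∪ sphere cB rB ∩ sphere cB' rB' := by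
  rintro z ⟨hz, hz'⟩
  rcases frontier_closedBall_inter_closedBall_subset hrA hrB hz with h | h <;>
    rcases frontier_closedBall_inter_closedBall_subset hrA' hrB' hz' with h' | h'
  · exact Or.inl (Or.inl (Or.inl ⟨h, h'⟩))
  · exact Or.inl (Or.inl (Or.inr ⟨h, h'⟩))
  · exact Or.inl (Or.inr ⟨h, h'⟩)
  · exact Or.inr ⟨h, h'⟩

lemma encard_frontier_inter_frontier_le_eight (hrA : rA ≠ 0) (hrB : rB ≠ 0) (hrA' : rA' ≠ 0)
    (hrB' : rB' ≠ 0) (htAA : CircTrans cA rA cA' rA') (htAB : CircTrans cA rA cB' rB')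
    (htBA : CircTrans cB rB cA' rA') (htBB : CircTrans cB rB cB' rB') :
    (frontier (closedBall cA rA ∩ closedBall cB rB) ∩
      frontier (closedBall cA' rA' ∩ closedBall cB' rB')).encard ≤ 8 :=
  calc _ ≤ (sphere cA rA ∩ sphere cA' rA' ∪ sphere cA rA ∩ sphere cB' rB' ∪
        sphere cB rB ∩ sphere cA' rA' ∪ sphere cB rB ∩ sphere cB' rB').encard :=
        encard_le_encard (frontier_inter_frontier_subset hrA hrB hrA' hrB')
    _ ≤ (sphere cA rA ∩ sphere cA' rA').encard + (sphere cA rA ∩ sphere cB' rB').encard +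
        (sphere cB rB ∩ sphere cA' rA').encard + (sphere cB rB ∩ sphere cB' rB').encard :=
        (encard_union_le _ _).trans (by
          gcongr
          exact (encard_union_le _ _).trans (by gcongr; exact encard_union_le _ _))
    _ ≤ 2 + 2 + 2 + 2 := by
        gcongr
        exacts [htAA.encard_sphere_inter_sphere_le_two, htAB.encard_sphere_inter_sphere_le_two,
          htBA.encard_sphere_inter_sphere_le_two, htBB.encard_sphere_inter_sphere_le_two]
    _ = 8 := by norm_num

lemma signChangeAt_of_mem_frontier_inter_frontier {γ : ℝ → ℂ} {t a b : ℝ}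
    (hrA : 0 < rA) (hrB : 0 < rB) (hrA' : 0 < rA') (hrB' : 0 < rB')
    (hγ : Continuous γ) (hab : Icc a b ∈ 𝓝 t) (hinj : InjOn γ (Icc a b))
    (hγE : ∀ u, γ u ∈ frontier (closedBall cA rA ∩ closedBall cB rB))
    (hγt : γ t ∈ frontier (closedBall cA' rA' ∩ closedBall cB' rB'))
    (htAA : CircTrans cA rA cA' rA') (htAB : CircTrans cA rA cB' rB')
    (htBA : CircTrans cB rB cA' rA') (htBB : CircTrans cB rB cB' rB')
    (hpts : ∀ z ∈ sphere cA rA ∩ sphere cB rB, z ∉ sphere cA' rA' ∪ sphere cB' rB')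
    (hpts' : ∀ z ∈ sphere cA' rA' ∩ sphere cB' rB', z ∉ sphere cA rA ∪ sphere cB rB) :
    SignChangeAt (fun u => max (Sphere.power ⟨cA', rA'⟩ (γ u)) (Sphere.power ⟨cB', rB'⟩ (γ u)))
      t := by
  have hγAB u := frontier_closedBall_inter_closedBall_subset hrA.ne' hrB.ne' (hγE u)
  have hγBA u := (hγAB u).symm
  have hswap := Eventually.of_forall (f := 𝓝 t) fun u =>
    max_comm (Sphere.power ⟨cA', rA'⟩ (γ u)) (Sphere.power ⟨cB', rB'⟩ (γ u))
  rcases mem_sphere_and_mem_ball_of_mem_frontier hrA.ne' hrB.ne' (hγE t) fun h => hpts _ h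
      (frontier_closedBall_inter_closedBall_subset hrA'.ne' hrB'.ne' hγt) with
      ⟨hA, hB⟩ | ⟨hB, hA⟩ <;>
    rcases mem_sphere_and_mem_ball_of_mem_frontier hrA'.ne' hrB'.ne' hγt fun h => hpts' _ h
      (frontier_closedBall_inter_closedBall_subset hrA.ne' hrB.ne' (hγE t)) with
      ⟨hA', hB'⟩ | ⟨hB', hA'⟩
  · exact signChangeAt_max_power_comp_of_mem_sphere hrA hrB'.le hγ hab hinj hγAB hB hA' hB' htAA
  · exact (signChangeAt_max_power_comp_of_mem_sphere hrA hrA'.le hγ hab hinj hγAB hB hB' hA'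
      htAB).congr hswap
  · exact signChangeAt_max_power_comp_of_mem_sphere hrB hrB'.le hγ hab hinj hγBA hA hA' hB' htBA
  · exact (signChangeAt_max_power_comp_of_mem_sphere hrB hrA'.le hγ hab hinj hγBA hA hB' hA'
      htBB).congr hswap

lemma even_ncard_frontier_inter_frontier
    (hrA : 0 < rA) (hrB : 0 < rB) (hrA' : 0 < rA') (hrB' : 0 < rB')
    (hov : (ball cA rA ∩ ball cB rB).Nonempty)
    (htAA : CircTrans cA rA cA' rA') (htAB : CircTrans cA rA cB' rB')
    (htBA : CircTrans cB rB cA' rA') (htBB : CircTrans cB rB cB' rB')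
    (hpts : ∀ z ∈ sphere cA rA ∩ sphere cB rB, z ∉ sphere cA' rA' ∪ sphere cB' rB')
    (hpts' : ∀ z ∈ sphere cA' rA' ∩ sphere cB' rB', z ∉ sphere cA rA ∪ sphere cB rB)
    (hfin : (frontier (closedBall cA rA ∩ closedBall cB rB) ∩
      frontier (closedBall cA' rA' ∩ closedBall cB' rB')).Finite) :
    Even (frontier (closedBall cA rA ∩ closedBall cB rB) ∩
      frontier (closedBall cA' rA' ∩ closedBall cB' rB')).ncard := by
  obtain ⟨γ, hγ, hγper, hγbij⟩ := exists_periodic_bijOn_frontier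
    ((convex_closedBall cA rA).inter (convex_closedBall cB rB))
    (by rwa [interior_inter, interior_closedBall _ hrA.ne', interior_closedBall _ hrB.ne'])
    (isBounded_closedBall.subset inter_subset_left)
  set ψ : ℝ → ℝ := fun u => max (Sphere.power ⟨cA', rA'⟩ (γ u)) (Sphere.power ⟨cB', rB'⟩ (γ u))
  have hψ (u : ℝ) : ψ u = 0 ↔ γ u ∈ frontier (closedBall cA' rA' ∩ closedBall cB' rB') := by
    rw [frontier_closedBall_inter_closedBall hrA'.ne' hrB'.ne']
    exact max_power_eq_zero_iff hrA'.le hrB'.le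
  have hγE (u : ℝ) : γ u ∈ frontier (closedBall cA rA ∩ closedBall cB rB) :=
    (hγbij u).mapsTo ⟨le_rfl, by linarith [two_pi_pos]⟩
  have hcross (t : ℝ) (ht : ψ t = 0) : SignChangeAt ψ t := by
    have hinj : InjOn γ (Icc (t - 1) (t + 1)) :=
      (hγbij (t - 1)).injOn.mono (Icc_subset_Ico_right (by linarith [pi_gt_three]))
    exact signChangeAt_of_mem_frontier_inter_frontier hrA hrB hrA' hrB' hγ
      (Icc_mem_nhds (by linarith) (by linarith)) hinj hγE ((hψ t).1 ht) htAA htAB htBA htBB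
      hpts hpts'
  obtain ⟨a, ha⟩ : ∃ a, ψ a ≠ 0 := by
    by_cases h0 : ψ 0 = 0
    exacts [(hcross 0 h0).exists_ne_zero, ⟨0, h0⟩]
  have hinj : InjOn γ {t ∈ Ico a (a + 2 * π) | ψ t = 0} := (hγbij a).injOn.mono (sep_subset _ _)
  have himage : γ '' {t ∈ Ico a (a + 2 * π) | ψ t = 0} =
      frontier (closedBall cA rA ∩ closedBall cB rB) ∩
        frontier (closedBall cA' rA' ∩ closedBall cB' rB') := by
    ext z
    constructor
    · rintro ⟨t, ⟨-, h0⟩, rfl⟩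
      exact ⟨hγE t, (hψ t).1 h0⟩
    · rintro ⟨hz, hz'⟩
      obtain ⟨t, ht, rfl⟩ := (hγbij a).surjOn hz
      exact ⟨t, ⟨ht, (hψ t).2 hz'⟩, rfl⟩
  have hψc : Continuous ψ := by
    simp only [ψ, Sphere.power]
    fun_prop
  rw [← himage, hinj.ncard_image]
  exact Function.Periodic.even_ncard_zeros (fun u => by simp only [ψ, hγper u]) two_pi_pos hψc
    hcross ha ((himage ▸ hfin).of_finite_image hinj)

lemma not_spheres_subset_ball_union_ball (hrA : 0 ≤ rA) (hrB : 0 ≤ rB) (hrA' : 0 ≤ rA')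
    (hrB' : 0 ≤ rB') :
    ¬ (sphere cA rA ⊆ ball cA' rA' ∪ ball cB' rB' ∧ sphere cB rB ⊆ ball cA' rA' ∪ ball cB' rB' ∧
      sphere cA' rA' ⊆ ball cA rA ∪ ball cB rB ∧ sphere cB' rB' ⊆ ball cA rA ∪ ball cB rB) := by
  rintro ⟨hA, hB, hA', hB'⟩
  refine not_forall_sphere_subset_iUnion_ball ![cA, cB, cA', cB'] ![rA, rB, rA', rB']
    (fun i => by fin_cases i <;> simp [hrA, hrB, hrA', hrB']) fun i => ?_
  fin_cases i
  · exact hA.trans (union_subset (subset_iUnion_of_subset 2 subset_rfl)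
      (subset_iUnion_of_subset 3 subset_rfl))
  · exact hB.trans (union_subset (subset_iUnion_of_subset 2 subset_rfl)
      (subset_iUnion_of_subset 3 subset_rfl))
  · exact hA'.trans (union_subset (subset_iUnion_of_subset 0 subset_rfl)
      (subset_iUnion_of_subset 1 subset_rfl))
  · exact hB'.trans (union_subset (subset_iUnion_of_subset 0 subset_rfl)
      (subset_iUnion_of_subset 1 subset_rfl))

lemma ncard_frontier_inter_frontier_ne_eight
    (hrA : 0 < rA) (hrB : 0 < rB) (hrA' : 0 < rA') (hrB' : 0 < rB')
    (htAA : CircTrans cA rA cA' rA') (htAB : CircTrans cA rA cB' rB')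
    (htBA : CircTrans cB rB cA' rA') (htBB : CircTrans cB rB cB' rB')
    (hpts : ∀ z ∈ sphere cA rA ∩ sphere cB rB, z ∉ sphere cA' rA' ∪ sphere cB' rB')
    (hpts' : ∀ z ∈ sphere cA' rA' ∩ sphere cB' rB', z ∉ sphere cA rA ∪ sphere cB rB) :
    (frontier (closedBall cA rA ∩ closedBall cB rB) ∩
      frontier (closedBall cA' rA' ∩ closedBall cB' rB')).ncard ≠ 8 := by
  set T := frontier (closedBall cA rA ∩ closedBall cB rB) ∩
    frontier (closedBall cA' rA' ∩ closedBall cB' rB')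
  intro h8
  obtain ⟨⟨hAA, hAA'⟩, ⟨hAB, hAB'⟩, ⟨hBA, hBA'⟩, ⟨-, hBB'⟩⟩ :=
    Set.nonempty_and_subset_of_ncard_eq_eight
      (frontier_inter_frontier_subset hrA.ne' hrB.ne' hrA'.ne' hrB'.ne')
      htAA.encard_sphere_inter_sphere_le_two htAB.encard_sphere_inter_sphere_le_two
      htBA.encard_sphere_inter_sphere_le_two htBB.encard_sphere_inter_sphere_le_two h8
  have hE : T ⊆ closedBall cA rA ∩ closedBall cB rB :=
    inter_subset_left.trans (isClosed_closedBall.inter isClosed_closedBall).frontier_subset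
  have hE' : T ⊆ closedBall cA' rA' ∩ closedBall cB' rB' :=
    inter_subset_right.trans (isClosed_closedBall.inter isClosed_closedBall).frontier_subset
  have hA := sphere_subset_ball_union_ball hrA.le (fun z hz => (hE' (hAA' hz)).2)
    (fun z hz => (hE' (hAB' hz)).1)
    (eq_empty_iff_forall_notMem.2 fun z hz => hpts' z ⟨hz.1.2, hz.2⟩ (Or.inl hz.1.1)) hAA
  have hB := sphere_subset_ball_union_ball hrB.le (fun z hz => (hE' (hBA' hz)).2)
    (fun z hz => (hE' (hBB' hz)).1)
    (eq_empty_iff_forall_notMem.2 fun z hz => hpts' z ⟨hz.1.2, hz.2⟩ (Or.inr hz.1.1)) hBA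
  have hA' := sphere_subset_ball_union_ball hrA'.le (fun z hz => (hE (hAA' ⟨hz.2, hz.1⟩)).2)
    (fun z hz => (hE (hBA' ⟨hz.2, hz.1⟩)).1)
    (eq_empty_iff_forall_notMem.2 fun z hz => hpts z ⟨hz.1.2, hz.2⟩ (Or.inl hz.1.1))
    (hAA.mono fun z hz => ⟨hz.2, hz.1⟩)
  have hB' := sphere_subset_ball_union_ball hrB'.le (fun z hz => (hE (hAB' ⟨hz.2, hz.1⟩)).2)
    (fun z hz => (hE (hBB' ⟨hz.2, hz.1⟩)).1)
    (eq_empty_iff_forall_notMem.2 fun z hz => hpts z ⟨hz.1.2, hz.2⟩ (Or.inr hz.1.1))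
    (hAB.mono fun z hz => ⟨hz.2, hz.1⟩)
  exact not_spheres_subset_ball_union_ball hrA.le hrB.le hrA'.le hrB'.le
    ⟨hA, hB, hA', hB'⟩

end TwoEyes

theorem eyes_meet_at_most_six_general
    (cA cB cA' cB' : ℂ) (rA rB rA' rB' : ℝ)
    (hrA : 0 < rA) (hrB : 0 < rB) (hrA' : 0 < rA') (hrB' : 0 < rB')
    (hovAB : (ball cA rA ∩ ball cB rB).Nonempty)
    -- general position:
    (htAA : CircTrans cA rA cA' rA') (htAB : CircTrans cA rA cB' rB')
    (htBA : CircTrans cB rB cA' rA') (htBB : CircTrans cB rB cB' rB')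
    (hpts : ∀ z ∈ Metric.sphere cA rA ∩ Metric.sphere cB rB,
      z ∉ Metric.sphere cA' rA' ∪ Metric.sphere cB' rB')
    (hpts' : ∀ z ∈ Metric.sphere cA' rA' ∩ Metric.sphere cB' rB',
      z ∉ Metric.sphere cA rA ∪ Metric.sphere cB rB) :
    ((frontier (closedBall cA rA ∩ closedBall cB rB) ∩
        frontier (closedBall cA' rA' ∩ closedBall cB' rB')).Finite) ∧
      (frontier (closedBall cA rA ∩ closedBall cB rB) ∩
        frontier (closedBall cA' rA' ∩ closedBall cB' rB')).ncard ∈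
        ({0, 2, 4, 6} : Set ℕ) := by
  obtain ⟨hfin, hle⟩ := (encard_le_coe_iff_finite_ncard_le (k := 8)).mp
    (encard_frontier_inter_frontier_le_eight hrA.ne' hrB.ne' hrA'.ne' hrB'.ne' htAA htAB htBA htBB)
  obtain ⟨k, hk⟩ := even_ncard_frontier_inter_frontier hrA hrB hrA' hrB' hovAB htAA htAB htBA htBB
    hpts hpts' hfin
  have hne :=
    ncard_frontier_inter_frontier_ne_eight hrA hrB hrA' hrB' htAA htAB htBA htBB hpts hpts'
  refine ⟨hfin, ?_⟩
  simp only [mem_insert_iff, mem_singleton_iff]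
  omega

/-- **Lemma: boundaries of two eyes meet 0, 2, 4 or 6 times.**  Let `{A,B}` and
`{Ã,B̃}` be pairs of overlapping closed disks in `ℂ` in general position, and set
`E = A ∩ B`, `Ẽ = Ã ∩ B̃`.  Then `∂E ∩ ∂Ẽ` is a finite set of cardinality
`0`, `2`, `4` or `6` (in particular never `8`). -/
theorem eyes_meet_at_most_six
    (cA cB cA' cB' : ℂ) (rA rB rA' rB' : ℝ)
    (hrA : 0 < rA) (hrB : 0 < rB) (hrA' : 0 < rA') (hrB' : 0 < rB')
    (hovAB : (ball cA rA ∩ ball cB rB).Nonempty)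
    (hovAB' : (ball cA' rA' ∩ ball cB' rB').Nonempty)
    -- general position:
    (htAA : CircTrans cA rA cA' rA') (htAB : CircTrans cA rA cB' rB')
    (htBA : CircTrans cB rB cA' rA') (htBB : CircTrans cB rB cB' rB')
    (hpts : ∀ z ∈ Metric.sphere cA rA ∩ Metric.sphere cB rB,
      z ∉ Metric.sphere cA' rA' ∪ Metric.sphere cB' rB')
    (hpts' : ∀ z ∈ Metric.sphere cA' rA' ∩ Metric.sphere cB' rB',
      z ∉ Metric.sphere cA rA ∪ Metric.sphere cB rB) :
    ((frontier (closedBall cA rA ∩ closedBall cB rB) ∩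
        frontier (closedBall cA' rA' ∩ closedBall cB' rB')).Finite) ∧
      (frontier (closedBall cA rA ∩ closedBall cB rB) ∩
        frontier (closedBall cA' rA' ∩ closedBall cB' rB')).ncard ∈
        ({0, 2, 4, 6} : Set ℕ) :=
  eyes_meet_at_most_six_general cA cB cA' cB' rA rB rA' rB' hrA hrB hrA' hrB' hovAB htAA htAB htBA
    htBB hpts hpts'
end
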